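/- arXiv:1903.03824 — 2 statements merged into one kernel-verified Lean document; each statement's English description precedes it below -/
import Mathlib

section
/- Let R ∈ (0,∞], let φ : [0,R) → ℝ be strictly increasing and convex, and define ρ : B̊_R^{(d)} → (0,∞) by ρ(x) = exp(−φ(|x|)), assumed Lebesgue-integrable. Then for all x, y ∈ B̊_R^{(d)}, W(U_ρ(x,·), U_ρ(y,·)) ≤ (1 − 1/(d+1)) |x − y|. -/
open MeasureTheory Set ENNReal Filter

noncomputable section

abbrev Euc (d : ℕ) : Type := EuclideanSpace ℝ (Fin d)

def levelSet {d : ℕ} (G : Set (Euc d)) (ρ : Euc d → ℝ) (t : ℝ) : Set (Euc d) :=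
  {x ∈ G | t ≤ ρ x}

def sliceKernel {d : ℕ} (G : Set (Euc d)) (ρ : Euc d → ℝ) (x : Euc d) : Measure (Euc d) :=
  (ENNReal.ofReal (ρ x))⁻¹ •
    ((volume.restrict (Ioc (0 : ℝ) (ρ x))).bind fun t =>
      (volume (levelSet G ρ t))⁻¹ • volume.restrict (levelSet G ρ t))

def wassersteinDist {α : Type*} [MeasurableSpace α] [PseudoEMetricSpace α]
    (μ ν : Measure α) : ℝ≥0∞ :=
  ⨅ γ ∈ {γ : Measure (α × α) | γ.map Prod.fst = μ ∧ γ.map Prod.snd = ν},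
    ∫⁻ p, edist p.1 p.2 ∂γ

def openBall (d : ℕ) (R : ℝ≥0∞) : Set (Euc d) := {x | (‖x‖₊ : ℝ≥0∞) < R}

def phiDom (R : ℝ≥0∞) : Set ℝ := {s | 0 ≤ s ∧ ENNReal.ofReal s < R}

open Metric Pointwise

namespace SliceAux

variable {d : ℕ} {R : ℝ≥0∞} {φ : ℝ → ℝ}

def SSet (R : ℝ≥0∞) (φ : ℝ → ℝ) (c : ℝ) : Set ℝ := {s | s ∈ phiDom R ∧ φ s ≤ c}

def psi (R : ℝ≥0∞) (φ : ℝ → ℝ) (c : ℝ) : ℝ := sSup (SSet R φ c)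

def rad (R : ℝ≥0∞) (φ : ℝ → ℝ) (t : ℝ) : ℝ := psi R φ (-Real.log t)

lemma norm_mem_phiDom {z : Euc d} : z ∈ openBall d R ↔ ‖z‖ ∈ phiDom R := by
  simp only [openBall, mem_setOf_eq, phiDom, norm_nonneg, true_and]
  rw [← ofReal_coe_nnreal, coe_nnnorm]

lemma mem_levelSet_iff {t : ℝ} (ht : 0 < t) {z : Euc d} :
    z ∈ levelSet (openBall d R) (fun z => Real.exp (-φ ‖z‖)) t ↔
      ‖z‖ ∈ phiDom R ∧ φ ‖z‖ ≤ -Real.log t := by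
  simp only [levelSet, mem_setOf_eq, norm_mem_phiDom]
  constructor
  · rintro ⟨h1, h2⟩
    refine ⟨h1, ?_⟩
    have := (Real.log_le_iff_le_exp ht).2 h2
    linarith
  · rintro ⟨h1, h2⟩
    refine ⟨h1, ?_⟩
    have : Real.log t ≤ -φ ‖z‖ := by linarith
    calc t = Real.exp (Real.log t) := (Real.exp_log ht).symm
    _ ≤ Real.exp (-φ ‖z‖) := Real.exp_le_exp.2 this

lemma levelSet_antitone {G : Set (Euc d)} {ρ : Euc d → ℝ} : Antitone (levelSet G ρ) := by
  intro t t' h z hz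
  exact ⟨hz.1, h.trans hz.2⟩

lemma SSet_down (hmono : StrictMonoOn φ (phiDom R)) {c s s' : ℝ} (hs' : s' ∈ phiDom R)
    (hle : s' ≤ s) (hs : s ∈ SSet R φ c) : s' ∈ SSet R φ c :=
  ⟨hs', le_trans (hmono.monotoneOn hs' hs.1 hle) hs.2⟩

lemma psi_nonneg (c : ℝ) : 0 ≤ psi R φ c := by
  rcases eq_empty_or_nonempty (SSet R φ c) with h | h
  · simp [psi, h, Real.sSup_empty]
  · obtain ⟨s, hs⟩ := h
    rcases isEmpty_or_nonempty (BddAbove (SSet R φ c) : Prop) with h' | h'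
    · have : ¬ BddAbove (SSet R φ c) := fun hb => h'.elim' hb
      simp [psi, Real.sSup_of_not_bddAbove this]
    · exact le_trans hs.1.1 (le_csSup h'.some hs)


lemma bddAbove_SSet (hd : 0 < d) (hmono : StrictMonoOn φ (phiDom R))
    (hint : IntegrableOn (fun x : Euc d => Real.exp (-φ ‖x‖)) (openBall d R)) (c : ℝ) :
    BddAbove (SSet R φ c) := by
  rcases eq_or_ne R ⊤ with rfl | hRtop
  swap
  · refine ⟨R.toReal, fun s hs => ?_⟩
    have h2 : ENNReal.ofReal s < R := hs.1.2
    exact le_of_lt (by rwa [ENNReal.ofReal_lt_iff_lt_toReal hs.1.1 hRtop] at h2)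
  · by_contra hb
    -- every ball is contained in the level set at exp (-c)
    set t := Real.exp (-c) with ht_def
    have ht : 0 < t := Real.exp_pos _
    have hC : ∫⁻ z in openBall d ⊤, ENNReal.ofReal (Real.exp (-φ ‖z‖)) < ⊤ := by
      have h := hint.2
      rw [HasFiniteIntegral] at h
      refine lt_of_le_of_lt (lintegral_mono fun z => ?_) h
      rw [← ofReal_norm]
      exact ENNReal.ofReal_le_ofReal (le_abs_self _)
    set C := ∫⁻ z in openBall d ⊤, ENNReal.ofReal (Real.exp (-φ ‖z‖)) with hCdef
    have key : ∀ M : ℝ, ENNReal.ofReal t * volume (Metric.ball (0 : Euc d) M) ≤ C := by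
      intro M
      obtain ⟨s, hs, hMs⟩ := not_bddAbove_iff.1 hb M
      have hball : Metric.ball (0 : Euc d) M ⊆ openBall d ⊤ := fun z _ => by
        simp [openBall]
      have hball2 : ∀ z ∈ Metric.ball (0 : Euc d) M, t ≤ Real.exp (-φ ‖z‖) := by
        intro z hz
        have hzn : ‖z‖ < s := lt_trans (by simpa using hz) hMs
        have hdom : ‖z‖ ∈ phiDom ⊤ := ⟨norm_nonneg _, by simp⟩
        have : φ ‖z‖ ≤ c := le_trans (le_of_lt (hmono hdom hs.1 hzn)) hs.2
        rw [ht_def]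
        exact Real.exp_le_exp.2 (by linarith)
      calc ENNReal.ofReal t * volume (Metric.ball (0 : Euc d) M)
          = ∫⁻ _ in Metric.ball (0 : Euc d) M, ENNReal.ofReal t := by
            rw [setLIntegral_const]
        _ ≤ ∫⁻ z in Metric.ball (0 : Euc d) M, ENNReal.ofReal (Real.exp (-φ ‖z‖)) := by
            refine setLIntegral_mono_ae' measurableSet_ball ?_
            exact Eventually.of_forall fun z hz => ENNReal.ofReal_le_ofReal (hball2 z hz)
        _ ≤ C := lintegral_mono_set hball
    -- contradiction: volume of balls tends to infinity
    haveI : Nontrivial (Euc d) := by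
      have : 0 < Module.finrank ℝ (Euc d) := by simpa [finrank_euclideanSpace_fin] using hd
      exact Module.nontrivial_of_finrank_pos this
    have hV1 : 0 < volume (Metric.ball (0 : Euc d) 1) := Metric.measure_ball_pos _ _ one_pos
    have hsup : ∀ n : ℕ, ENNReal.ofReal t * (ENNReal.ofReal ((n : ℝ) ^ d) *
        volume (Metric.ball (0 : Euc d) 1)) ≤ C := by
      intro n
      have := key n
      rwa [MeasureTheory.Measure.addHaar_ball _ _ (by positivity : (0:ℝ) ≤ (n:ℝ)),
        finrank_euclideanSpace_fin] at this
    set V1 := volume (Metric.ball (0 : Euc d) 1) with hV1def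
    set b := ENNReal.ofReal t * V1 with hbdef
    have hb0 : b ≠ 0 := by
      apply mul_ne_zero
      · simpa using ht
      · exact hV1.ne'
    have hbtop : b ≠ ⊤ := by
      apply ENNReal.mul_ne_top ENNReal.ofReal_ne_top measure_ball_lt_top.ne
    obtain ⟨n, hn⟩ := ENNReal.exists_nat_gt (show C / b ≠ ⊤ from
      (ENNReal.div_lt_top hC.ne hb0).ne)
    have hCn : C < (n : ℝ≥0∞) * b := by
      rw [← ENNReal.div_lt_iff (Or.inl hb0) (Or.inl hbtop)]
      exact hn
    have hle : ((n : ℝ≥0∞)) ≤ ENNReal.ofReal (((n:ℕ)+1 : ℝ) ^ d) := by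
      calc ((n : ℝ≥0∞)) = ENNReal.ofReal (n : ℝ) := by simp
      _ ≤ ENNReal.ofReal (((n:ℕ)+1 : ℝ) ^ d) := by
          apply ENNReal.ofReal_le_ofReal
          calc (n : ℝ) ≤ (n : ℝ) + 1 := by linarith
          _ ≤ ((n:ℕ)+1 : ℝ) ^ d := by
              exact le_self_pow₀ (by have := Nat.cast_nonneg (α:=ℝ) n; linarith) hd.ne'
    have hcontr := hsup (n+1)
    have : C < ENNReal.ofReal t * (ENNReal.ofReal (((n:ℕ)+1 : ℝ) ^ d) * V1) := by
      calc C < (n : ℝ≥0∞) * b := hCn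
      _ ≤ ENNReal.ofReal (((n:ℕ)+1 : ℝ) ^ d) * b :=
          mul_le_mul_left hle b
      _ = ENNReal.ofReal t * (ENNReal.ofReal (((n:ℕ)+1 : ℝ) ^ d) * V1) := by
          rw [hbdef]; ring
    rw [show (((n:ℕ):ℝ)+1) = (((n+1 : ℕ)):ℝ) by push_cast; ring] at this
    exact absurd hcontr (not_le.2 this)


section withBdd
variable (hbdd : ∀ c, BddAbove (SSet R φ c))

lemma psi_mono (hbdd : ∀ c, BddAbove (SSet R φ c)) : Monotone (psi R φ) := by
  intro c c' h
  rcases eq_empty_or_nonempty (SSet R φ c) with he | he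
  · rw [psi, he, Real.sSup_empty]; exact psi_nonneg c'
  · exact csSup_le_csSup (hbdd c') he (fun s hs => ⟨hs.1, hs.2.trans h⟩)

lemma psi_measurable (hbdd : ∀ c, BddAbove (SSet R φ c)) : Measurable (psi R φ) :=
  (psi_mono hbdd).measurable

lemma rad_measurable (hbdd : ∀ c, BddAbove (SSet R φ c)) : Measurable (rad R φ) :=
  (psi_measurable hbdd).comp (Real.measurable_log.neg)

lemma le_psi_of_mem (hbdd : ∀ c, BddAbove (SSet R φ c)) {c s : ℝ} (hs : s ∈ SSet R φ c) :
    s ≤ psi R φ c := le_csSup (hbdd c) hs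

lemma rad_antitoneOn (hbdd : ∀ c, BddAbove (SSet R φ c)) {t t' : ℝ} (ht : 0 < t) (h : t ≤ t') :
    rad R φ t' ≤ rad R φ t := by
  apply psi_mono hbdd
  simp only [neg_le_neg_iff]
  exact Real.log_le_log ht h

-- a ≤ rad t when t ≤ exp (-φ a)
lemma le_rad (hbdd : ∀ c, BddAbove (SSet R φ c)) {a t : ℝ} (ha : a ∈ phiDom R) (ht : 0 < t)
    (hta : t ≤ Real.exp (-φ a)) : a ≤ rad R φ t := by
  apply le_psi_of_mem hbdd
  refine ⟨ha, ?_⟩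
  have := (Real.log_le_iff_le_exp ht).2 hta
  linarith

end withBdd

-- existence of a point of phiDom strictly above b
lemma exists_gt_mem_phiDom (hR : 0 < R) {b : ℝ} (hb : b ∈ phiDom R) :
    ∃ u ∈ phiDom R, b < u := by
  rcases eq_or_ne R ⊤ with rfl | hRtop
  · exact ⟨b + 1, ⟨by linarith [hb.1], by simp⟩, by linarith⟩
  · have hbR : b < R.toReal := by
      have := hb.2
      rwa [ENNReal.ofReal_lt_iff_lt_toReal hb.1 hRtop] at this
    refine ⟨(b + R.toReal) / 2, ⟨by linarith [hb.1], ?_⟩, by linarith⟩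
    rw [ENNReal.ofReal_lt_iff_lt_toReal (by linarith [hb.1]) hRtop]
    linarith

-- strictly-inside positivity: if φ b < c then b < psi c
lemma lt_psi_of_lt (hR : 0 < R) (hconv : ConvexOn ℝ (phiDom R) φ)
    (hbdd : ∀ c, BddAbove (SSet R φ c)) {b c : ℝ} (hb : b ∈ phiDom R) (hbc : φ b < c) :
    b < psi R φ c := by
  obtain ⟨u, hu, hbu⟩ := exists_gt_mem_phiDom hR hb
  rcases le_or_gt (φ u) c with h | h
  · exact lt_of_lt_of_le hbu (le_psi_of_mem hbdd ⟨hu, h⟩)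
  · set ε : ℝ := (c - φ b) / (φ u - φ b) with hε_def
    have hφbu : φ b < φ u := lt_trans hbc h
    have hε0 : 0 < ε := by apply div_pos <;> linarith
    have hε1 : ε < 1 := by
      rw [div_lt_one (by linarith)]; linarith
    set s : ℝ := (1 - ε) * b + ε * u with hs_def
    have hbs : b < s := by
      have : s - b = ε * (u - b) := by ring
      nlinarith
    have hsu : s < u := by nlinarith
    have hsdom : s ∈ phiDom R := by
      refine ⟨by linarith [hb.1], lt_of_le_of_lt (ENNReal.ofReal_le_ofReal hsu.le) hu.2⟩
    have hφs : φ s ≤ c := by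
      have := hconv.2 hb hu (by linarith : (0:ℝ) ≤ 1 - ε) hε0.le (by ring)
      have heq : (1 - ε) * φ b + ε * φ u = c := by
        have hεmul : ε * (φ u - φ b) = c - φ b := by
          rw [hε_def, div_mul_cancel₀ _ (by linarith : φ u - φ b ≠ 0)]
        nlinarith [hεmul]
      calc φ s ≤ (1 - ε) * φ b + ε * φ u := by simpa [hs_def] using this
      _ = c := heq
    exact lt_of_lt_of_le hbs (le_psi_of_mem hbdd ⟨hsdom, hφs⟩)

-- the key concavity estimate
lemma psi_concave_step (hconv : ConvexOn ℝ (phiDom R) φ)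
    (hbdd : ∀ c, BddAbove (SSet R φ c)) {a b c : ℝ} (ha : a ∈ phiDom R) (hb : b ∈ phiDom R)
    (hba : b ≤ a) (hc : φ a ≤ c) :
    psi R φ c ≤ psi R φ (c - (φ a - φ b)) + (a - b) := by
  rcases eq_or_lt_of_le hba with rfl | hba'
  · simp [le_refl]
  have hne : (SSet R φ c).Nonempty := ⟨a, ha, hc⟩
  apply csSup_le hne
  intro σ hσ
  have hbc' : φ b ≤ c - (φ a - φ b) := by linarith
  have hbpsi : b ≤ psi R φ (c - (φ a - φ b)) := le_psi_of_mem hbdd ⟨hb, hbc'⟩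
  rcases le_or_gt σ a with hσa | hσa
  · linarith
  · -- slope argument
    set δ : ℝ := a - b with hδ_def
    have hδ0 : 0 < δ := by linarith
    have hσdom : σ ∈ phiDom R := hσ.1
    have hσδdom : σ - δ ∈ phiDom R := by
      constructor
      · linarith [hb.1]
      · exact lt_of_le_of_lt (ENNReal.ofReal_le_ofReal (by linarith)) hσdom.2
    -- slope f b a ≤ slope f b σ
    have h1 : (φ a - φ b) / (a - b) ≤ (φ σ - φ b) / (σ - b) :=
      hconv.secant_mono hb ha hσdom (by linarith) (by linarith) (by linarith)
    -- slope f σ b ≤ slope f σ (σ - δ)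
    have h2 : (φ b - φ σ) / (b - σ) ≤ (φ (σ - δ) - φ σ) / ((σ - δ) - σ) :=
      hconv.secant_mono hσdom hb hσδdom (by linarith) (by linarith) (by linarith)
    have h2' : (φ σ - φ b) / (σ - b) = (φ b - φ σ) / (b - σ) := by
      rw [← neg_div_neg_eq]; ring_nf
    have h3 : (φ (σ - δ) - φ σ) / ((σ - δ) - σ) = (φ σ - φ (σ - δ)) / δ := by
      rw [← neg_div_neg_eq]; ring_nf
    have hslope : (φ a - φ b) / δ ≤ (φ σ - φ (σ - δ)) / δ := by
      rw [hδ_def]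
      calc (φ a - φ b) / (a - b) ≤ (φ σ - φ b) / (σ - b) := h1
      _ = (φ b - φ σ) / (b - σ) := h2'
      _ ≤ (φ (σ - δ) - φ σ) / ((σ - δ) - σ) := h2
      _ = (φ σ - φ (σ - δ)) / (a - b) := by rw [h3, hδ_def]
    have hφστ : φ a - φ b ≤ φ σ - φ (σ - δ) := by
      have := (div_le_div_iff_of_pos_right hδ0).1 hslope
      linarith [this]
    have : σ - δ ∈ SSet R φ (c - (φ a - φ b)) := ⟨hσδdom, by
      have hσc := hσ.2
      linarith⟩
    have := le_psi_of_mem hbdd this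
    linarith


section Geom
variable (hd : 0 < d) (hmono : StrictMonoOn φ (phiDom R)) (hbdd : ∀ c, BddAbove (SSet R φ c))

-- notation
local notation "L" => levelSet (openBall d R) (fun z : Euc d => Real.exp (-φ ‖z‖))

lemma ball_subset_levelSet (hmono : StrictMonoOn φ (phiDom R)) {t : ℝ} (ht : 0 < t) :
    ball (0 : Euc d) (rad R φ t) ⊆ L t := by
  intro z hz
  rw [mem_ball_zero_iff] at hz
  have hpos : 0 < psi R φ (-Real.log t) := lt_of_le_of_lt (norm_nonneg z) hz
  have hne : (SSet R φ (-Real.log t)).Nonempty := by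
    by_contra h
    rw [not_nonempty_iff_eq_empty] at h
    rw [psi, h, Real.sSup_empty] at hpos
    exact lt_irrefl _ hpos
  obtain ⟨s, hs, hzs⟩ := exists_lt_of_lt_csSup hne hz
  rw [mem_levelSet_iff (R := R) ht]
  have hzdom : ‖z‖ ∈ phiDom R :=
    ⟨norm_nonneg _, lt_of_le_of_lt (ENNReal.ofReal_le_ofReal hzs.le) hs.1.2⟩
  exact ⟨hzdom, le_trans (hmono.monotoneOn hzdom hs.1 hzs.le) hs.2⟩

lemma levelSet_subset_closedBall (hbdd : ∀ c, BddAbove (SSet R φ c)) {t : ℝ} (ht : 0 < t) :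
    L t ⊆ closedBall (0 : Euc d) (rad R φ t) := by
  intro z hz
  rw [mem_levelSet_iff (R := R) ht] at hz
  rw [mem_closedBall_zero_iff]
  exact le_psi_of_mem hbdd ⟨hz.1, hz.2⟩

lemma levelSet_ae_ball (hd : 0 < d) (hmono : StrictMonoOn φ (phiDom R))
    (hbdd : ∀ c, BddAbove (SSet R φ c)) {t : ℝ} (ht : 0 < t) :
    (L t : Set (Euc d)) =ᵐ[volume] ball (0 : Euc d) (rad R φ t) := by
  haveI : Nontrivial (Euc d) := by
    have : 0 < Module.finrank ℝ (Euc d) := by simpa [finrank_euclideanSpace_fin] using hd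
    exact Module.nontrivial_of_finrank_pos this
  have h1 : volume ((L t) \ ball (0 : Euc d) (rad R φ t)) = 0 := by
    apply measure_mono_null (t := sphere (0 : Euc d) (rad R φ t)) ?_ ?_
    · intro z hz
      have h2 := levelSet_subset_closedBall hbdd ht hz.1
      have h3 := hz.2
      simp only [mem_closedBall_zero_iff] at h2
      simp only [mem_ball_zero_iff, not_lt] at h3
      simp only [mem_sphere_zero_iff_norm]
      linarith
    · exact Measure.addHaar_sphere _ _ _
  have h2 : volume (ball (0 : Euc d) (rad R φ t) \ L t) = 0 := by
    rw [diff_eq_empty.2 (ball_subset_levelSet hmono ht)]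
    exact measure_empty
  rw [Filter.eventuallyEq_set]
  rw [ae_iff]
  apply measure_mono_null (t := ((L t) \ ball (0 : Euc d) (rad R φ t)) ∪
    (ball (0 : Euc d) (rad R φ t) \ L t)) ?_ ?_
  · intro z hz
    simp only [mem_setOf_eq, not_iff] at hz
    by_cases h : z ∈ L t
    · exact Or.inl ⟨h, by tauto⟩
    · exact Or.inr ⟨by tauto, h⟩
  · exact measure_union_null h1 h2

lemma volume_levelSet (hd : 0 < d) (hmono : StrictMonoOn φ (phiDom R))
    (hbdd : ∀ c, BddAbove (SSet R φ c)) {t : ℝ} (ht : 0 < t) :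
    volume (L t : Set (Euc d)) = volume (ball (0 : Euc d) (rad R φ t)) :=
  measure_congr (levelSet_ae_ball hd hmono hbdd ht)

lemma volume_levelSet_inter (hd : 0 < d) (hmono : StrictMonoOn φ (phiDom R))
    (hbdd : ∀ c, BddAbove (SSet R φ c)) {t : ℝ} (ht : 0 < t) (A : Set (Euc d)) :
    volume ((A ∩ L t : Set (Euc d))) = volume (A ∩ ball (0 : Euc d) (rad R φ t)) :=
  measure_congr (EventuallyEq.inter (ae_eq_refl _) (levelSet_ae_ball hd hmono hbdd ht))

end Geom

-- measurability of the slice kernel integrand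
lemma kernel_measurable :
    Measurable (fun t => (volume (levelSet (openBall d R)
        (fun z : Euc d => Real.exp (-φ ‖z‖)) t))⁻¹ •
      volume.restrict (levelSet (openBall d R) (fun z : Euc d => Real.exp (-φ ‖z‖)) t)) := by
  apply Measure.measurable_of_measurable_coe
  intro A hA
  simp only [Measure.smul_apply, Measure.restrict_apply hA, smul_eq_mul]
  have h1 : Antitone (fun t => volume (A ∩ levelSet (openBall d R)
      (fun z : Euc d => Real.exp (-φ ‖z‖)) t)) := by
    intro t t' h
    apply measure_mono
    apply inter_subset_inter_right
    intro z hz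
    exact ⟨hz.1, h.trans hz.2⟩
  have h2 : Monotone (fun t => (volume (levelSet (openBall d R)
      (fun z : Euc d => Real.exp (-φ ‖z‖)) t))⁻¹) := by
    intro t t' h
    apply ENNReal.inv_le_inv.2
    apply measure_mono
    intro z hz
    exact ⟨hz.1, h.trans hz.2⟩
  exact (h2.measurable).mul (h1.measurable)

lemma sliceKernel_apply {x : Euc d} {A : Set (Euc d)} (hA : MeasurableSet A) :
    sliceKernel (openBall d R) (fun z : Euc d => Real.exp (-φ ‖z‖)) x A =
      (ENNReal.ofReal (Real.exp (-φ ‖x‖)))⁻¹ *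
        ∫⁻ t in Ioc (0:ℝ) (Real.exp (-φ ‖x‖)),
          (volume (levelSet (openBall d R) (fun z : Euc d => Real.exp (-φ ‖z‖)) t))⁻¹ *
          volume (A ∩ levelSet (openBall d R) (fun z : Euc d => Real.exp (-φ ‖z‖)) t) := by
  rw [sliceKernel, Measure.smul_apply, Measure.bind_apply hA kernel_measurable.aemeasurable, smul_eq_mul]
  congr 1
  apply lintegral_congr
  intro t
  rw [Measure.smul_apply, Measure.restrict_apply hA, smul_eq_mul]


lemma lintegral_norm_ball (hd : 0 < d) {r : ℝ} (hr : 0 ≤ r) :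
    ∫⁻ z in ball (0 : Euc d) r, ENNReal.ofReal ‖z‖ =
      volume (ball (0 : Euc d) 1) * ENNReal.ofReal (r ^ (d + 1) * (d / (d + 1))) := by
  haveI : Nontrivial (Euc d) := by
    have : 0 < Module.finrank ℝ (Euc d) := by simpa [finrank_euclideanSpace_fin] using hd
    exact Module.nontrivial_of_finrank_pos this
  set V1 := volume (ball (0 : Euc d) 1) with hV1
  have hV1top : V1 ≠ ⊤ := measure_ball_lt_top.ne
  rw [lintegral_eq_lintegral_meas_lt _ (Eventually.of_forall fun z => norm_nonneg z)
    (by fun_prop)]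
  have hmeas : ∀ t : ℝ, (volume.restrict (ball (0 : Euc d) r)) {z | t < ‖z‖} =
      volume (ball (0 : Euc d) r \ closedBall (0 : Euc d) t) := by
    intro t
    have hms : MeasurableSet {z : Euc d | t < ‖z‖} :=
      measurableSet_lt measurable_const (by fun_prop)
    rw [Measure.restrict_apply hms]
    congr 1
    ext z
    simp only [mem_inter_iff, mem_setOf_eq, mem_diff, mem_ball_zero_iff,
      mem_closedBall_zero_iff, not_le]
    tauto
  simp only [hmeas]
  rw [← Ioc_union_Ioi_eq_Ioi hr, lintegral_union measurableSet_Ioi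
    (Set.Ioc_disjoint_Ioi le_rfl)]
  have hzero : ∫⁻ t in Ioi r, volume (ball (0 : Euc d) r \ closedBall (0 : Euc d) t) = 0 := by
    rw [setLIntegral_congr_fun measurableSet_Ioi (fun t ht => ?_)]
    · exact lintegral_zero
    · rw [diff_eq_empty.2 (ball_subset_closedBall.trans
        (closedBall_subset_closedBall (le_of_lt ht)))]
      exact measure_empty
  rw [hzero, add_zero]
  rw [setLIntegral_congr (Ioo_ae_eq_Ioc (α := ℝ) (a := 0) (b := r)).symm]
  have hpt : ∀ t ∈ Ioo (0:ℝ) r, volume (ball (0 : Euc d) r \ closedBall (0 : Euc d) t) =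
      ENNReal.ofReal (r ^ d - t ^ d) * V1 := by
    intro t ht
    rw [measure_diff (closedBall_subset_ball ht.2) measurableSet_closedBall.nullMeasurableSet
      measure_closedBall_lt_top.ne]
    rw [Measure.addHaar_ball _ _ hr, Measure.addHaar_closedBall _ _ (le_of_lt ht.1),
      finrank_euclideanSpace_fin]
    rw [ENNReal.ofReal_sub _ (pow_nonneg ht.1.le d), ENNReal.sub_mul (fun _ _ => hV1top), ← hV1]
  rw [setLIntegral_congr_fun measurableSet_Ioo hpt]
  rw [lintegral_mul_const' _ _ hV1top]
  have hint : IntegrableOn (fun t : ℝ => r ^ d - t ^ d) (Ioo 0 r) := by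
    apply ((continuous_const.sub (continuous_pow d)).integrableOn_Icc (a := 0) (b := r)).mono_set
    exact Ioo_subset_Icc_self
  rw [← ofReal_integral_eq_lintegral_ofReal hint ?nn]
  case nn =>
    rw [EventuallyLE, ae_restrict_iff' measurableSet_Ioo]
    refine Eventually.of_forall fun t ht => ?_
    simp only [Pi.zero_apply, sub_nonneg]
    exact pow_le_pow_left₀ (le_of_lt ht.1) ht.2.le d
  have hval : ∫ t in Ioo (0:ℝ) r, (r ^ d - t ^ d) = r ^ (d + 1) * (d / (d + 1)) := by
    rw [← integral_Ioc_eq_integral_Ioo, ← intervalIntegral.integral_of_le hr]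
    rw [intervalIntegral.integral_sub intervalIntegrable_const
      (intervalIntegral.intervalIntegrable_pow d)]
    rw [intervalIntegral.integral_const, integral_pow]
    have hd1 : ((d : ℝ) + 1) ≠ 0 := by positivity
    field_simp
    ring
  rw [hval, mul_comm]

-- pushforward of restricted Lebesgue measure on a ball under scaling, evaluated on a set
lemma volume_ball_preimage_smul (hd : 0 < d) {c r : ℝ} (hc : 0 < c) (A : Set (Euc d)) :
    volume ((fun z : Euc d => c • z) ⁻¹' A ∩ ball (0 : Euc d) r) =
      (ENNReal.ofReal (c ^ d))⁻¹ * volume (A ∩ ball (0 : Euc d) (c * r)) := by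
  have h1 : (fun z : Euc d => c • z) ⁻¹' A = c⁻¹ • A := Set.preimage_smul₀ hc.ne' A
  have h2 : ball (0 : Euc d) r = c⁻¹ • ball (0 : Euc d) (c * r) := by
    rw [_root_.smul_ball (inv_ne_zero hc.ne')]
    rw [smul_zero]
    congr 1
    rw [Real.norm_eq_abs, abs_of_pos (inv_pos.2 hc)]
    field_simp
  rw [h1, h2, ← Set.smul_set_inter₀ (inv_ne_zero hc.ne')]
  rw [Measure.addHaar_smul]
  rw [finrank_euclideanSpace_fin]
  congr 1
  rw [abs_of_pos (by positivity), ← ENNReal.ofReal_inv_of_pos (by positivity)]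
  congr 1
  field_simp
  rw [← mul_pow, one_div, inv_mul_cancel₀ hc.ne', one_pow]

-- change of variables for Lebesgue integral under multiplication
lemma lintegral_comp_mul_left {h : ℝ → ℝ≥0∞} (hh : Measurable h) {k T : ℝ} (hk : 0 < k) :
    ∫⁻ t in Ioc (0:ℝ) T, h (k * t) =
      ENNReal.ofReal k⁻¹ * ∫⁻ s in Ioc (0:ℝ) (k * T), h s := by
  have hemb : MeasurableEmbedding (fun t : ℝ => k * t) :=
    (Homeomorph.mulLeft₀ k hk.ne').measurableEmbedding
  have hpre : (fun t : ℝ => k * t) ⁻¹' (Ioc 0 (k * T)) = Ioc 0 T := by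
    ext t
    simp only [mem_preimage, mem_Ioc]
    constructor
    · rintro ⟨h1, h2⟩
      constructor
      · nlinarith
      · nlinarith
    · rintro ⟨h1, h2⟩
      constructor
      · positivity
      · nlinarith
  have hmap := Real.map_volume_mul_left hk.ne'
  calc ∫⁻ t in Ioc (0:ℝ) T, h (k * t)
      = ∫⁻ s, h s ∂((volume.restrict (Ioc (0:ℝ) T)).map (fun t => k * t)) := by
        rw [lintegral_map hh (measurable_const_mul k)]
    _ = ∫⁻ s, h s ∂((volume.map (fun t => k * t)).restrict (Ioc 0 (k * T))) := by
        rw [hemb.restrict_map volume (Ioc 0 (k * T)), hpre]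
    _ = ENNReal.ofReal k⁻¹ * ∫⁻ s in Ioc (0:ℝ) (k * T), h s := by
        rw [hmap]
        rw [abs_of_pos (inv_pos.2 hk)]
        rw [Measure.restrict_smul]
        rw [lintegral_smul_measure, smul_eq_mul]


end SliceAux

namespace SliceAux

-- The main estimate in the case ‖y‖ < ‖x‖.
lemma key (d : ℕ) (hd : 0 < d) (R : ℝ≥0∞) (hR : 0 < R) (φ : ℝ → ℝ)
    (hmono : StrictMonoOn φ (phiDom R)) (hconv : ConvexOn ℝ (phiDom R) φ)
    (hint : IntegrableOn (fun x : Euc d => Real.exp (-φ ‖x‖)) (openBall d R))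
    (x y : Euc d) (hx : x ∈ openBall d R) (hy : y ∈ openBall d R) (hba : ‖y‖ < ‖x‖) :
    wassersteinDist
        (sliceKernel (openBall d R) (fun z => Real.exp (-φ ‖z‖)) x)
        (sliceKernel (openBall d R) (fun z => Real.exp (-φ ‖z‖)) y)
      ≤ ENNReal.ofReal ((1 - 1/((d : ℝ) + 1)) * ‖x - y‖) := by
  haveI : Nontrivial (Euc d) := by
    have : 0 < Module.finrank ℝ (Euc d) := by simpa [finrank_euclideanSpace_fin] using hd
    exact Module.nontrivial_of_finrank_pos this
  have hbdd : ∀ c, BddAbove (SSet R φ c) := bddAbove_SSet hd hmono hint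
  set a : ℝ := ‖x‖ with ha_def
  set b : ℝ := ‖y‖ with hb_def
  have hadom : a ∈ phiDom R := norm_mem_phiDom.1 hx
  have hbdom : b ∈ phiDom R := norm_mem_phiDom.1 hy
  have ha0 : 0 < a := lt_of_le_of_lt (norm_nonneg y) hba
  have hb0 : 0 ≤ b := norm_nonneg y
  set ρx : ℝ := Real.exp (-φ a) with hρx_def
  set ρy : ℝ := Real.exp (-φ b) with hρy_def
  have hρx0 : 0 < ρx := Real.exp_pos _
  have hρy0 : 0 < ρy := Real.exp_pos _
  have hφba : φ b < φ a := hmono hbdom hadom hba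
  set k : ℝ := ρy / ρx with hk_def
  have hk0 : 0 < k := div_pos hρy0 hρx0
  have hk1 : 1 < k := by
    rw [hk_def, lt_div_iff₀ hρx0, one_mul]
    exact Real.exp_lt_exp.2 (by linarith)
  have hkρx : k * ρx = ρy := by rw [hk_def]; field_simp
  have hlogk : Real.log k = φ a - φ b := by
    rw [hk_def, hρy_def, hρx_def, ← Real.exp_sub, Real.log_exp]
    ring_nf
  -- the coupling
  set cf : ℝ → ℝ := fun t => rad R φ (k * t) / rad R φ t with hcf_def
  set κ : ℝ → Measure (Euc d × Euc d) := fun t =>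
    (volume (ball (0 : Euc d) (rad R φ t)))⁻¹ •
      ((volume.restrict (ball (0 : Euc d) (rad R φ t))).map
        (fun z => (z, cf t • z))) with hκ_def
  set γ : Measure (Euc d × Euc d) :=
    (ENNReal.ofReal ρx)⁻¹ • ((volume.restrict (Ioc (0:ℝ) ρx)).bind κ) with hγ_def
  have hradm : Measurable (rad R φ) := rad_measurable hbdd
  have hcm : Measurable cf := (hradm.comp (measurable_const_mul k)).div hradm
  have hVm : Measurable fun s : ℝ => volume (ball (0 : Euc d) (rad R φ s)) := by
    have : Monotone fun r : ℝ => volume (ball (0 : Euc d) r) :=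
      fun r r' h => measure_mono (ball_subset_ball h)
    exact this.measurable.comp hradm
  have hVAm : ∀ A : Set (Euc d),
      Measurable fun s : ℝ => volume (A ∩ ball (0 : Euc d) (rad R φ s)) := by
    intro A
    have : Monotone fun r : ℝ => volume (A ∩ ball (0 : Euc d) r) :=
      fun r r' h => measure_mono (inter_subset_inter_right _ (ball_subset_ball h))
    exact this.measurable.comp hradm
  have hpairt : ∀ t : ℝ, Measurable fun z : Euc d => (z, cf t • z) :=
    fun t => measurable_id.prodMk (measurable_id.const_smul (cf t))
  have hκm : Measurable κ := by
    apply Measure.measurable_of_measurable_coe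
    intro A hA
    have hS : MeasurableSet {p : ℝ × Euc d | (p.2, cf p.1 • p.2) ∈ A ∧ ‖p.2‖ < rad R φ p.1} := by
      refine MeasurableSet.inter ?_ ?_
      · exact (measurable_snd.prodMk ((hcm.comp measurable_fst).smul measurable_snd)) hA
      · exact measurableSet_lt (measurable_norm.comp measurable_snd)
          (hradm.comp measurable_fst)
    have hsect := measurable_measure_prodMk_left (ν := (volume : Measure (Euc d))) hS
    have heq : (fun t => κ t A) = fun t =>
        (volume (ball (0 : Euc d) (rad R φ t)))⁻¹ *
          volume (Prod.mk t ⁻¹' {p : ℝ × Euc d | (p.2, cf p.1 • p.2) ∈ A ∧ ‖p.2‖ < rad R φ p.1}) := by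
      funext t
      rw [hκ_def]
      simp only [Measure.smul_apply, smul_eq_mul]
      congr 1
      rw [Measure.map_apply (hpairt t) hA, Measure.restrict_apply ((hpairt t) hA)]
      congr 1
      ext z
      simp only [mem_inter_iff, mem_preimage, mem_setOf_eq, mem_ball_zero_iff]
    rw [heq]
    exact (hVm.inv).mul hsect
  -- evaluation of κ on preimages
  have hκ_eval : ∀ (t : ℝ) (B : Set (Euc d × Euc d)), MeasurableSet B →
      κ t B = (volume (ball (0 : Euc d) (rad R φ t)))⁻¹ *
        volume ((fun z : Euc d => (z, cf t • z)) ⁻¹' B ∩ ball (0 : Euc d) (rad R φ t)) := by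
    intro t B hB
    rw [hκ_def]
    simp only [Measure.smul_apply, smul_eq_mul]
    rw [Measure.map_apply (hpairt t) hB, Measure.restrict_apply ((hpairt t) hB)]
  -- radius facts
  have hrt_posIoc : ∀ t ∈ Ioc (0:ℝ) ρx, 0 < rad R φ t := fun t ht =>
    lt_of_lt_of_le ha0 (le_rad hbdd hadom ht.1 ht.2)
  have hrt_a : ∀ t ∈ Ioc (0:ℝ) ρx, a ≤ rad R φ t := fun t ht =>
    le_rad hbdd hadom ht.1 ht.2
  have hrkt_b : ∀ t ∈ Ioc (0:ℝ) ρx, b ≤ rad R φ (k * t) := by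
    intro t ht
    apply le_rad hbdd hbdom (mul_pos hk0 ht.1)
    rw [← hρy_def, ← hkρx]
    exact mul_le_mul_of_nonneg_left ht.2 hk0.le
  have hrkt_pos : ∀ t ∈ Ioo (0:ℝ) ρx, 0 < rad R φ (k * t) := by
    intro t ht
    have hkt : k * t < ρy := by
      rw [← hkρx]
      exact (mul_lt_mul_iff_right₀ hk0).2 ht.2
    have hlog : φ b < -Real.log (k * t) := by
      have h1 : Real.log (k * t) < -φ b := by
        rw [← Real.log_exp (-φ b), ← hρy_def]
        exact Real.log_lt_log (mul_pos hk0 ht.1) hkt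
      linarith
    calc (0:ℝ) ≤ b := hb0
    _ < psi R φ (-Real.log (k * t)) := lt_psi_of_lt hR hconv hbdd hbdom hlog
  have hrkt_le : ∀ t ∈ Ioc (0:ℝ) ρx, rad R φ (k * t) ≤ rad R φ t := by
    intro t ht
    exact rad_antitoneOn hbdd ht.1 (by nlinarith [ht.1])
  have hcf_mul : ∀ t ∈ Ioo (0:ℝ) ρx, cf t * rad R φ t = rad R φ (k * t) := by
    intro t ht
    rw [hcf_def]
    exact div_mul_cancel₀ _ (hrt_posIoc t ⟨ht.1, ht.2.le⟩).ne'
  have hcf_pos : ∀ t ∈ Ioo (0:ℝ) ρx, 0 < cf t := by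
    intro t ht
    exact div_pos (hrkt_pos t ht) (hrt_posIoc t ⟨ht.1, ht.2.le⟩)
  have hcf_le1 : ∀ t ∈ Ioo (0:ℝ) ρx, cf t ≤ 1 := by
    intro t ht
    rw [hcf_def, div_le_one (hrt_posIoc t ⟨ht.1, ht.2.le⟩)]
    exact hrkt_le t ⟨ht.1, ht.2.le⟩
  -- volume of balls facts
  have hVfin : ∀ r : ℝ, volume (ball (0 : Euc d) r) ≠ ⊤ := fun r => measure_ball_lt_top.ne
  have hVpos : ∀ r : ℝ, 0 < r → volume (ball (0 : Euc d) r) ≠ 0 := fun r hr =>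
    (measure_ball_pos _ _ hr).ne'
  -- first marginal
  have hfst : γ.map Prod.fst = sliceKernel (openBall d R) (fun z => Real.exp (-φ ‖z‖)) x := by
    ext A hA
    rw [Measure.map_apply measurable_fst hA, hγ_def, Measure.smul_apply,
      Measure.bind_apply (measurable_fst hA) hκm.aemeasurable, smul_eq_mul, sliceKernel_apply hA]
    rw [← ha_def, ← hρx_def]
    congr 1
    apply setLIntegral_congr_fun measurableSet_Ioc
    intro t ht
    dsimp only
    rw [hκ_eval t _ (measurable_fst hA)]
    have hpre : (fun z : Euc d => (z, cf t • z)) ⁻¹' (Prod.fst ⁻¹' A) = A := rfl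
    rw [hpre, volume_levelSet hd hmono hbdd ht.1, volume_levelSet_inter hd hmono hbdd ht.1]
  -- scaling of ball volumes
  have hVscale : ∀ t ∈ Ioo (0:ℝ) ρx, ENNReal.ofReal ((cf t) ^ d) *
      volume (ball (0 : Euc d) (rad R φ t)) = volume (ball (0 : Euc d) (rad R φ (k * t))) := by
    intro t ht
    rw [← hcf_mul t ht]
    rw [Measure.addHaar_ball _ _ (hrt_posIoc t ⟨ht.1, ht.2.le⟩).le,
      Measure.addHaar_ball _ _ (mul_nonneg (hcf_pos t ht).le
        (hrt_posIoc t ⟨ht.1, ht.2.le⟩).le),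
      finrank_euclideanSpace_fin, mul_pow,
      ENNReal.ofReal_mul (pow_nonneg (hcf_pos t ht).le d)]
    ring
  -- second marginal
  have hsnd : γ.map Prod.snd = sliceKernel (openBall d R) (fun z => Real.exp (-φ ‖z‖)) y := by
    ext A hA
    have hhm : Measurable fun s : ℝ => (volume (ball (0 : Euc d) (rad R φ s)))⁻¹ *
        volume (A ∩ ball (0 : Euc d) (rad R φ s)) := (hVm.inv).mul (hVAm A)
    rw [Measure.map_apply measurable_snd hA, hγ_def, Measure.smul_apply,
      Measure.bind_apply (measurable_snd hA) hκm.aemeasurable, smul_eq_mul, sliceKernel_apply hA,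
      ← hb_def, ← hρy_def]
    have hpt : ∀ t ∈ Ioo (0:ℝ) ρx, κ t (Prod.snd ⁻¹' A) =
        (volume (ball (0 : Euc d) (rad R φ (k * t))))⁻¹ *
          volume (A ∩ ball (0 : Euc d) (rad R φ (k * t))) := by
      intro t ht
      rw [hκ_eval t _ (measurable_snd hA)]
      have hpre : (fun z : Euc d => (z, cf t • z)) ⁻¹' (Prod.snd ⁻¹' A)
          = (fun z : Euc d => cf t • z) ⁻¹' A := rfl
      rw [hpre, volume_ball_preimage_smul hd (hcf_pos t ht) A, hcf_mul t ht, ← mul_assoc]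
      congr 1
      rw [← ENNReal.mul_inv (Or.inr ENNReal.ofReal_ne_top) (Or.inl (hVfin _))]
      congr 1
      rw [mul_comm]
      exact hVscale t ht
    have hstep : ∫⁻ t in Ioc (0:ℝ) ρx, κ t (Prod.snd ⁻¹' A) =
        ENNReal.ofReal k⁻¹ * ∫⁻ s in Ioc (0:ℝ) ρy,
          (volume (ball (0 : Euc d) (rad R φ s)))⁻¹ *
            volume (A ∩ ball (0 : Euc d) (rad R φ s)) := by
      calc ∫⁻ t in Ioc (0:ℝ) ρx, κ t (Prod.snd ⁻¹' A)
          = ∫⁻ t in Ioo (0:ℝ) ρx, κ t (Prod.snd ⁻¹' A) :=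
            (setLIntegral_congr (Ioo_ae_eq_Ioc (a := (0:ℝ)) (b := ρx))).symm
        _ = ∫⁻ t in Ioo (0:ℝ) ρx, (volume (ball (0 : Euc d) (rad R φ (k * t))))⁻¹ *
              volume (A ∩ ball (0 : Euc d) (rad R φ (k * t))) :=
            setLIntegral_congr_fun measurableSet_Ioo hpt
        _ = ∫⁻ t in Ioc (0:ℝ) ρx, (volume (ball (0 : Euc d) (rad R φ (k * t))))⁻¹ *
              volume (A ∩ ball (0 : Euc d) (rad R φ (k * t))) :=
            setLIntegral_congr (Ioo_ae_eq_Ioc (a := (0:ℝ)) (b := ρx))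
        _ = ENNReal.ofReal k⁻¹ * ∫⁻ s in Ioc (0:ℝ) (k * ρx),
              (volume (ball (0 : Euc d) (rad R φ s)))⁻¹ *
                volume (A ∩ ball (0 : Euc d) (rad R φ s)) :=
            lintegral_comp_mul_left hhm hk0
        _ = ENNReal.ofReal k⁻¹ * ∫⁻ s in Ioc (0:ℝ) ρy,
              (volume (ball (0 : Euc d) (rad R φ s)))⁻¹ *
                volume (A ∩ ball (0 : Euc d) (rad R φ s)) := by rw [hkρx]
    rw [hstep]
    have heq2 : ∫⁻ s in Ioc (0:ℝ) ρy,
        (volume (levelSet (openBall d R) (fun z : Euc d => Real.exp (-φ ‖z‖)) s))⁻¹ *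
          volume (A ∩ levelSet (openBall d R) (fun z : Euc d => Real.exp (-φ ‖z‖)) s) =
        ∫⁻ s in Ioc (0:ℝ) ρy, (volume (ball (0 : Euc d) (rad R φ s)))⁻¹ *
          volume (A ∩ ball (0 : Euc d) (rad R φ s)) := by
      apply setLIntegral_congr_fun measurableSet_Ioc
      intro s hs
      dsimp only
      rw [volume_levelSet hd hmono hbdd hs.1, volume_levelSet_inter hd hmono hbdd hs.1]
    rw [heq2, ← mul_assoc]
    congr 1
    rw [ENNReal.ofReal_inv_of_pos hk0,
      ← ENNReal.mul_inv (Or.inr ENNReal.ofReal_ne_top) (Or.inl ENNReal.ofReal_ne_top),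
      ← ENNReal.ofReal_mul hρx0.le, mul_comm ρx k, hkρx]
  -- cost of the coupling
  have hedist : Measurable fun p : Euc d × Euc d => edist p.1 p.2 :=
    measurable_fst.edist measurable_snd
  set q : ℝ := (d : ℝ) / ((d : ℝ) + 1) with hq_def
  have hq0 : 0 ≤ q := by positivity
  have hV10 : volume (ball (0 : Euc d) 1) ≠ 0 := (measure_ball_pos _ _ one_pos).ne'
  have hcost_inner : ∀ t ∈ Ioo (0:ℝ) ρx,
      ∫⁻ p, edist p.1 p.2 ∂(κ t) = ENNReal.ofReal ((rad R φ t - rad R φ (k * t)) * q) := by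
    intro t ht
    have hrt0 : 0 < rad R φ t := hrt_posIoc t ⟨ht.1, ht.2.le⟩
    have hc0 := hcf_pos t ht
    have hc1 := hcf_le1 t ht
    have hstep1 : ∫⁻ p, edist p.1 p.2 ∂(κ t) =
        (volume (ball (0 : Euc d) (rad R φ t)))⁻¹ *
          ∫⁻ z in ball (0 : Euc d) (rad R φ t), edist z (cf t • z) := by
      simp only [hκ_def]
      rw [lintegral_smul_measure, lintegral_map hedist (hpairt t), smul_eq_mul]
    rw [hstep1]
    have hpoint : ∀ z : Euc d, edist z (cf t • z) =
        ENNReal.ofReal (1 - cf t) * ENNReal.ofReal ‖z‖ := by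
      intro z
      rw [edist_eq_enorm_sub, ← ofReal_norm,
        ← ENNReal.ofReal_mul (by linarith : (0:ℝ) ≤ 1 - cf t)]
      congr 1
      have hz : z - cf t • z = (1 - cf t) • z := by rw [sub_smul, one_smul]
      rw [hz, norm_smul, Real.norm_eq_abs, abs_of_nonneg (by linarith)]
    rw [lintegral_congr hpoint, lintegral_const_mul' _ _ ENNReal.ofReal_ne_top,
      lintegral_norm_ball hd hrt0.le]
    have h1 : (rad R φ t) ^ (d+1) * ((d:ℝ) / ((d:ℝ) + 1)) =
        (rad R φ t) ^ d * (rad R φ t * q) := by rw [hq_def]; ring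
    rw [h1, ENNReal.ofReal_mul (pow_nonneg hrt0.le d),
      Measure.addHaar_ball _ _ hrt0.le, finrank_euclideanSpace_fin]
    set X := ENNReal.ofReal ((rad R φ t) ^ d) with hX_def
    set V1 := volume (ball (0 : Euc d) 1) with hV1_def
    set Y := ENNReal.ofReal (rad R φ t * q) with hY_def
    set C := ENNReal.ofReal (1 - cf t) with hC_def
    have hX0 : X ≠ 0 := (ENNReal.ofReal_pos.2 (by positivity)).ne'
    have hcalc : (X * V1)⁻¹ * (C * (V1 * (X * Y))) = C * Y := by
      rw [ENNReal.mul_inv (Or.inl hX0) (Or.inl ENNReal.ofReal_ne_top)]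
      calc X⁻¹ * V1⁻¹ * (C * (V1 * (X * Y)))
          = (X⁻¹ * X) * ((V1⁻¹ * V1) * (C * Y)) := by ring
        _ = C * Y := by
            rw [ENNReal.inv_mul_cancel hX0 ENNReal.ofReal_ne_top,
              ENNReal.inv_mul_cancel hV10 (hVfin 1), one_mul, one_mul]
    rw [hcalc, hC_def, hY_def, ← ENNReal.ofReal_mul (by linarith : (0:ℝ) ≤ 1 - cf t)]
    congr 1
    have h2 : (1 - cf t) * (rad R φ t * q) = (rad R φ t - cf t * rad R φ t) * q := by ring
    rw [h2, hcf_mul t ht]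
  -- pointwise bound on the inner cost via concavity
  have hconc : ∀ t ∈ Ioo (0:ℝ) ρx, rad R φ t - rad R φ (k * t) ≤ a - b := by
    intro t ht
    have hlogt : φ a ≤ -Real.log t := by
      have h1 : Real.log t ≤ Real.log ρx := Real.log_le_log ht.1 ht.2.le
      rw [hρx_def, Real.log_exp] at h1
      linarith
    have hlogkt : -Real.log (k * t) = -Real.log t - (φ a - φ b) := by
      rw [Real.log_mul hk0.ne' ht.1.ne', hlogk]
      ring
    have hkey := psi_concave_step hconv hbdd hadom hbdom hba.le hlogt
    rw [rad, rad, hlogkt]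
    linarith
  have hcost : ∫⁻ p, edist p.1 p.2 ∂γ ≤ ENNReal.ofReal ((a - b) * q) := by
    rw [hγ_def, lintegral_smul_measure, Measure.lintegral_bind hκm.aemeasurable hedist.aemeasurable]
    rw [setLIntegral_congr (Ioo_ae_eq_Ioc (a := (0:ℝ)) (b := ρx)).symm]
    have hb1 : ∫⁻ t in Ioo (0:ℝ) ρx, ∫⁻ p, edist p.1 p.2 ∂(κ t) ≤
        ENNReal.ofReal ((a - b) * q) * ENNReal.ofReal ρx := by
      have hmono' : ∀ t ∈ Ioo (0:ℝ) ρx,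
          ∫⁻ p, edist p.1 p.2 ∂(κ t) ≤ ENNReal.ofReal ((a - b) * q) := by
        intro t ht
        rw [hcost_inner t ht]
        exact ENNReal.ofReal_le_ofReal (mul_le_mul_of_nonneg_right (hconc t ht) hq0)
      calc ∫⁻ t in Ioo (0:ℝ) ρx, ∫⁻ p, edist p.1 p.2 ∂(κ t)
          ≤ ∫⁻ _ in Ioo (0:ℝ) ρx, ENNReal.ofReal ((a - b) * q) :=
            setLIntegral_mono_ae' measurableSet_Ioo (Eventually.of_forall hmono')
        _ = ENNReal.ofReal ((a - b) * q) * volume (Ioo (0:ℝ) ρx) := setLIntegral_const _ _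
        _ = ENNReal.ofReal ((a - b) * q) * ENNReal.ofReal ρx := by
            rw [Real.volume_Ioo, sub_zero]
    calc (ENNReal.ofReal ρx)⁻¹ * ∫⁻ t in Ioo (0:ℝ) ρx, ∫⁻ p, edist p.1 p.2 ∂(κ t)
        ≤ (ENNReal.ofReal ρx)⁻¹ * (ENNReal.ofReal ((a - b) * q) * ENNReal.ofReal ρx) :=
          mul_le_mul_right hb1 _
      _ = ENNReal.ofReal ((a - b) * q) * ((ENNReal.ofReal ρx)⁻¹ * ENNReal.ofReal ρx) := by
          ring
      _ = ENNReal.ofReal ((a - b) * q) := by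
          rw [ENNReal.inv_mul_cancel (ENNReal.ofReal_pos.2 hρx0).ne' ENNReal.ofReal_ne_top,
            mul_one]
  -- conclusion
  have hfinal : ENNReal.ofReal ((a - b) * q) ≤
      ENNReal.ofReal ((1 - 1/((d : ℝ) + 1)) * ‖x - y‖) := by
    apply ENNReal.ofReal_le_ofReal
    have h1 : a - b ≤ ‖x - y‖ := norm_sub_norm_le x y
    have h2 : q = 1 - 1/((d : ℝ) + 1) := by
      rw [hq_def]
      field_simp
      ring
    calc (a - b) * q ≤ ‖x - y‖ * q := mul_le_mul_of_nonneg_right h1 hq0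
    _ = (1 - 1/((d : ℝ) + 1)) * ‖x - y‖ := by rw [h2]; ring
  rw [wassersteinDist]
  exact le_trans (iInf₂_le γ ⟨hfst, hsnd⟩) (le_trans hcost hfinal)


lemma wassersteinDist_le_symm {d : ℕ} (μ ν : Measure (Euc d)) :
    wassersteinDist μ ν ≤ wassersteinDist ν μ := by
  rw [wassersteinDist, wassersteinDist]
  apply le_iInf₂
  intro γ hγ
  have h1 : (γ.map Prod.swap).map Prod.fst = μ := by
    rw [Measure.map_map measurable_fst measurable_swap]
    have h : (Prod.fst ∘ Prod.swap : Euc d × Euc d → Euc d) = Prod.snd := rfl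
    rw [h]
    exact hγ.2
  have h2 : (γ.map Prod.swap).map Prod.snd = ν := by
    rw [Measure.map_map measurable_snd measurable_swap]
    have h : (Prod.snd ∘ Prod.swap : Euc d × Euc d → Euc d) = Prod.fst := rfl
    rw [h]
    exact hγ.1
  refine le_trans (iInf₂_le (γ.map Prod.swap) ⟨h1, h2⟩) ?_
  rw [lintegral_map (measurable_fst.edist measurable_snd) measurable_swap]
  apply le_of_eq
  apply lintegral_congr
  intro p
  exact edist_comm _ _

lemma wasserstein_self_le {d : ℕ} (μ : Measure (Euc d)) (r : ℝ≥0∞) :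
    wassersteinDist μ μ ≤ r := by
  rw [wassersteinDist]
  have hdiag : Measurable fun z : Euc d => (z, z) := measurable_id.prodMk measurable_id
  refine le_trans (iInf₂_le (μ.map (fun z => (z, z))) ⟨?_, ?_⟩) ?_
  case refine_2 =>
    rw [Measure.map_map measurable_fst hdiag]
    have h : (Prod.fst ∘ fun z : Euc d => (z, z)) = id := rfl
    rw [h, Measure.map_id]
  case refine_3 =>
    rw [Measure.map_map measurable_snd hdiag]
    have h : (Prod.snd ∘ fun z : Euc d => (z, z)) = id := rfl
    rw [h, Measure.map_id]
  case refine_1 =>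
    rw [lintegral_map (measurable_fst.edist measurable_snd) hdiag]
    simp only [edist_self, lintegral_zero]
    positivity

end SliceAux

theorem statement1 (d : ℕ) (hd : 0 < d) (R : ℝ≥0∞) (hR : 0 < R) (φ : ℝ → ℝ)
    (hmono : StrictMonoOn φ (phiDom R)) (hconv : ConvexOn ℝ (phiDom R) φ)
    (hint : IntegrableOn (fun x : Euc d => Real.exp (-φ ‖x‖)) (openBall d R))
    (x y : Euc d) (hx : x ∈ openBall d R) (hy : y ∈ openBall d R) :
    wassersteinDist
        (sliceKernel (openBall d R) (fun z => Real.exp (-φ ‖z‖)) x)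
        (sliceKernel (openBall d R) (fun z => Real.exp (-φ ‖z‖)) y)
      ≤ ENNReal.ofReal ((1 - 1/((d : ℝ) + 1)) * ‖x - y‖) := by
  rcases lt_trichotomy ‖y‖ ‖x‖ with h | h | h
  · exact SliceAux.key d hd R hR φ hmono hconv hint x y hx hy h
  · have hval : Real.exp (-φ ‖x‖) = Real.exp (-φ ‖y‖) := by rw [h]
    have hμ : sliceKernel (openBall d R) (fun z => Real.exp (-φ ‖z‖)) x =
        sliceKernel (openBall d R) (fun z => Real.exp (-φ ‖z‖)) y := by
      simp only [sliceKernel, hval]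
    rw [hμ]
    exact SliceAux.wasserstein_self_le _ _
  · have hkey := SliceAux.key d hd R hR φ hmono hconv hint y x hy hx h
    refine le_trans (SliceAux.wassersteinDist_le_symm _ _) (le_trans hkey (le_of_eq ?_))
    rw [norm_sub_rev]
end
end

section
/- Let G ⊆ ℝ^d be Borel and ρ : G → (0,∞) Lebesgue-integrable. Define V : L²(μ) → L²(π) by (Vg)(x) = (1/ρ(x)) ∫_0^{ρ(x)} g(t) dt and V* : L²(π) → L²(μ) by (V*f)(t) = (1/λ_d(G(t))) ∫_{G(t)} f(x) dx. Then V* is the adjoint of V, i.e. ⟨Vg, f⟩_π = ⟨g, V*f⟩_μ for all g ∈ L²(μ), f ∈ L²(π); moreover the Markov operators factor as U_ρ = V V* on L²(π) and Q_ρ = V* V on L²(μ). -/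
open MeasureTheory Set ENNReal Filter

open NNReal Function

noncomputable section

/-- The target distribution `π(A) = ∫_A ρ dλ_d / ∫_G ρ dλ_d`. -/
def targetMeasure {d : ℕ} (G : Set (Euc d)) (ρ : Euc d → ℝ) : Measure (Euc d) :=
  (∫⁻ x in G, ENNReal.ofReal (ρ x))⁻¹ •
    ((volume.restrict G).withDensity fun x => ENNReal.ofReal (ρ x))

/-- The spectral gap `1 - ‖K - E_π‖_{L²(π) → L²(π)}` of a transition kernel `K`
reversible with respect to `π`, where the operator norm is expressed as the supremum of
`‖K f - E_π f‖_{L²(π)}` over all `f ∈ L²(π)` with `‖f‖_{L²(π)} ≤ 1`. -/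
def specGap {α : Type*} [MeasurableSpace α] (π : Measure α) (K : α → Measure α) : ℝ :=
  1 - sSup {c : ℝ | ∃ f : α → ℝ, MemLp f 2 π ∧ eLpNorm f 2 π ≤ 1 ∧
      c = (eLpNorm (fun x => (∫ y, f y ∂(K x)) - ∫ y, f y ∂π) 2 π).toReal}

/-- The auxiliary transition kernel
`Q_ρ(t, B) = (1/λ_d(G(t))) ∫_{G(t)} λ_1(B ∩ [0, ρ(x)]) / ρ(x) dx` on `(0, ∞)`. -/
def auxKernel {d : ℕ} (G : Set (Euc d)) (ρ : Euc d → ℝ) (t : ℝ) : Measure ℝ :=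
  (volume (levelSet G ρ t))⁻¹ •
    ((volume.restrict (levelSet G ρ t)).bind fun x =>
      (ENNReal.ofReal (ρ x))⁻¹ • volume.restrict (Icc (0 : ℝ) (ρ x)))

/-- The measure `μ(B) = ∫_B ℓ_ρ(t) dt / ∫_0^∞ ℓ_ρ(r) dr` on `(0, ∞)`,
where `ℓ_ρ(t) = λ_d(G(t))` is the level-set function. -/
def auxMeasure {d : ℕ} (G : Set (Euc d)) (ρ : Euc d → ℝ) : Measure ℝ :=
  (∫⁻ t in Ioi (0 : ℝ), volume (levelSet G ρ t))⁻¹ •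
    ((volume.restrict (Ioi (0 : ℝ))).withDensity fun t => volume (levelSet G ρ t))

/-- The operator `V : L²(μ) → L²(π)`, `(Vg)(x) = (1/ρ(x)) ∫_0^{ρ(x)} g(t) dt`. -/
def Vop {d : ℕ} (ρ : Euc d → ℝ) (g : ℝ → ℝ) (x : Euc d) : ℝ :=
  (ρ x)⁻¹ * ∫ t in Ioc (0 : ℝ) (ρ x), g t

/-- The operator `V* : L²(π) → L²(μ)`, `(V*f)(t) = (1/λ_d(G(t))) ∫_{G(t)} f(x) dx`. -/
def Vstar {d : ℕ} (G : Set (Euc d)) (ρ : Euc d → ℝ) (f : Euc d → ℝ) (t : ℝ) : ℝ :=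
  ((volume (levelSet G ρ t)).toReal)⁻¹ * ∫ x in levelSet G ρ t, f x

/-! ### Auxiliary lemmas -/

section Aux

lemma inv_mul_mul_le' (a X : ℝ≥0∞) : a⁻¹ * X * a ≤ X := by
  rcases eq_or_ne a 0 with rfl | h0
  · simp
  rcases eq_or_ne a ⊤ with rfl | ht
  · simp
  · rw [mul_comm (a⁻¹ * X) a, ← mul_assoc, ENNReal.mul_inv_cancel h0 ht, one_mul]

lemma nnnorm_le_pos_add_neg (r : ℝ) :
    (‖r‖₊ : ℝ≥0∞) ≤ ENNReal.ofReal r + ENNReal.ofReal (-r) := by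
  rcases le_or_gt 0 r with h | h
  · refine le_add_of_le_of_nonneg ?_ zero_le
    exact (Real.enorm_eq_ofReal h).le
  · refine le_add_of_nonneg_of_le zero_le ?_
    show ‖r‖ₑ ≤ _
    rw [← ofReal_norm_eq_enorm]
    exact ENNReal.ofReal_le_ofReal (by rw [Real.norm_eq_abs, abs_of_neg h])

lemma my_integral_bind {α β : Type*} [MeasurableSpace α] [MeasurableSpace β]
    {ν : Measure α} {κ : α → Measure β} (hκ : Measurable κ) {f : β → ℝ}
    (hf : Measurable f) (hfin : ∫⁻ b, (‖f b‖₊ : ℝ≥0∞) ∂(ν.bind κ) < ⊤) :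
    ∫ b, f b ∂(ν.bind κ) = ∫ a, ∫ b, f b ∂(κ a) ∂ν := by
  set φp : β → ℝ≥0∞ := fun b => ENNReal.ofReal (f b) with hφp
  set φn : β → ℝ≥0∞ := fun b => ENNReal.ofReal (-(f b)) with hφn
  have hφpm : Measurable φp := hf.ennreal_ofReal
  have hφnm : Measurable φn := hf.neg.ennreal_ofReal
  have hple : ∀ b, φp b ≤ (‖f b‖₊ : ℝ≥0∞) := fun b => Real.ofReal_le_enorm _
  have hnle : ∀ b, φn b ≤ (‖f b‖₊ : ℝ≥0∞) := fun b => by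
    have := Real.ofReal_le_enorm (-(f b)); rw [enorm_neg] at this; exact this
  have hintf : Integrable f (ν.bind κ) := ⟨hf.aestronglyMeasurable, hfin⟩
  set A : α → ℝ≥0∞ := fun a => ∫⁻ b, φp b ∂(κ a) with hA
  set B : α → ℝ≥0∞ := fun a => ∫⁻ b, φn b ∂(κ a) with hB
  have hAm : Measurable A := (Measure.measurable_lintegral hφpm).comp hκ
  have hBm : Measurable B := (Measure.measurable_lintegral hφnm).comp hκ
  have hbp : ∫⁻ b, φp b ∂(ν.bind κ) = ∫⁻ a, A a ∂ν := Measure.lintegral_bind hκ.aemeasurable hφpm.aemeasurable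
  have hbn : ∫⁻ b, φn b ∂(ν.bind κ) = ∫⁻ a, B a ∂ν := Measure.lintegral_bind hκ.aemeasurable hφnm.aemeasurable
  have hAfin : ∫⁻ a, A a ∂ν ≠ ⊤ :=
    (hbp ▸ (lt_of_le_of_lt (lintegral_mono hple) hfin)).ne
  have hBfin : ∫⁻ a, B a ∂ν ≠ ⊤ :=
    (hbn ▸ (lt_of_le_of_lt (lintegral_mono hnle) hfin)).ne
  have hAae : ∀ᵐ a ∂ν, A a < ⊤ := ae_lt_top hAm hAfin
  have hBae : ∀ᵐ a ∂ν, B a < ⊤ := ae_lt_top hBm hBfin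
  have hAint : Integrable (fun a => (A a).toReal) ν :=
    integrable_toReal_of_lintegral_ne_top hAm.aemeasurable hAfin
  have hBint : Integrable (fun a => (B a).toReal) ν :=
    integrable_toReal_of_lintegral_ne_top hBm.aemeasurable hBfin
  rw [integral_eq_lintegral_pos_part_sub_lintegral_neg_part hintf]
  rw [hbp, hbn, ← integral_toReal hAm.aemeasurable hAae, ← integral_toReal hBm.aemeasurable hBae,
    ← integral_sub hAint hBint]
  refine integral_congr_ae ?_
  filter_upwards [hAae, hBae] with a hA2 hB2
  have hik : Integrable f (κ a) := by
    refine ⟨hf.aestronglyMeasurable, ?_⟩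
    have : ∫⁻ b, (‖f b‖₊ : ℝ≥0∞) ∂(κ a) ≤ A a + B a := by
      rw [← lintegral_add_left hφpm]
      exact lintegral_mono fun b => nnnorm_le_pos_add_neg (f b)
    exact lt_of_le_of_lt this (ENNReal.add_lt_top.2 ⟨hA2, hB2⟩)
  rw [integral_eq_lintegral_pos_part_sub_lintegral_neg_part hik]

end Aux

section LevelSet

variable {d : ℕ} {G : Set (Euc d)} {ρ : Euc d → ℝ}

lemma levelSet_eq (t : ℝ) : levelSet G ρ t = {x | t ≤ ρ x} ∩ G := by
  ext x; simp [levelSet, and_comm]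

lemma levelSet_subset (t : ℝ) : levelSet G ρ t ⊆ G := fun _ hx => hx.1

lemma measurableSet_levelSet (hG : MeasurableSet G) (hρ : Measurable ρ) (t : ℝ) :
    MeasurableSet (levelSet G ρ t) := by
  rw [levelSet_eq]; exact (measurableSet_le measurable_const hρ).inter hG

lemma levelSet_antitone : Antitone fun t => levelSet G ρ t := fun _ _ hab _ hx =>
  ⟨hx.1, hab.trans hx.2⟩

lemma ell_antitone : Antitone fun t => volume (levelSet G ρ t) := fun _ _ hab =>
  measure_mono (levelSet_antitone hab)

lemma ell_measurable : Measurable fun t => volume (levelSet G ρ t) :=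
  ell_antitone.measurable

lemma tonelli_key (hG : MeasurableSet G) (hρ : Measurable ρ)
    {F : Euc d × ℝ → ℝ≥0∞} (hF : Measurable F) :
    ∫⁻ x in G, ∫⁻ t in Ioc (0 : ℝ) (ρ x), F (x, t) ∂volume ∂volume
      = ∫⁻ t in Ioi (0 : ℝ), ∫⁻ x in levelSet G ρ t, F (x, t) ∂volume ∂volume := by
  have hS : MeasurableSet {p : Euc d × ℝ | p.2 ≤ ρ p.1} :=
    measurableSet_le measurable_snd (hρ.comp measurable_fst)
  have hFi : Measurable ({p : Euc d × ℝ | p.2 ≤ ρ p.1}.indicator F) := hF.indicator hS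
  have step1 : ∀ x : Euc d, ∫⁻ t in Ioc (0 : ℝ) (ρ x), F (x, t) ∂volume
      = ∫⁻ t in Ioi (0 : ℝ), {p : Euc d × ℝ | p.2 ≤ ρ p.1}.indicator F (x, t) ∂volume := by
    intro x
    have h1 : (fun t => {p : Euc d × ℝ | p.2 ≤ ρ p.1}.indicator F (x, t))
        = (Iic (ρ x)).indicator (fun t => F (x, t)) := by
      funext t; by_cases h : t ≤ ρ x <;> simp [Set.indicator_apply, h]
    rw [h1, lintegral_indicator measurableSet_Iic, Measure.restrict_restrict measurableSet_Iic]
    rw [Set.Iic_inter_Ioi]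
  have step2 : ∀ t : ℝ, ∫⁻ x in levelSet G ρ t, F (x, t) ∂volume
      = ∫⁻ x in G, {p : Euc d × ℝ | p.2 ≤ ρ p.1}.indicator F (x, t) ∂volume := by
    intro t
    have h1 : (fun x => {p : Euc d × ℝ | p.2 ≤ ρ p.1}.indicator F (x, t))
        = ({x | t ≤ ρ x}).indicator (fun x => F (x, t)) := by
      funext x; by_cases h : t ≤ ρ x <;> simp [Set.indicator_apply, h]
    rw [h1, lintegral_indicator (measurableSet_le measurable_const hρ),
      Measure.restrict_restrict (measurableSet_le measurable_const hρ), ← levelSet_eq]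
  simp only [step1]
  rw [lintegral_lintegral_swap]
  · exact lintegral_congr fun t => (step2 t).symm
  · exact hFi.aemeasurable

variable (hG : MeasurableSet G) (hρ : Measurable ρ)
include hG hρ

lemma key_const :
    ∫⁻ x in G, ENNReal.ofReal (ρ x) ∂volume = ∫⁻ t in Ioi (0 : ℝ), volume (levelSet G ρ t) := by
  have := tonelli_key hG hρ (F := fun _ => 1) measurable_const
  simpa [setLIntegral_one, Real.volume_Ioc] using this

lemma key_left {h : Euc d → ℝ≥0∞} (hh : Measurable h) :
    ∫⁻ x in G, h x * ENNReal.ofReal (ρ x) ∂volume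
      = ∫⁻ t in Ioi (0 : ℝ), ∫⁻ x in levelSet G ρ t, h x ∂volume ∂volume := by
  have := tonelli_key hG hρ (F := fun p => h p.1) (hh.comp measurable_fst)
  simpa [setLIntegral_const, Real.volume_Ioc] using this

lemma key_right {k : ℝ → ℝ≥0∞} (hk : Measurable k) :
    ∫⁻ x in G, ∫⁻ t in Ioc (0 : ℝ) (ρ x), k t ∂volume ∂volume
      = ∫⁻ t in Ioi (0 : ℝ), k t * volume (levelSet G ρ t) ∂volume := by
  have := tonelli_key hG hρ (F := fun p => k p.2) (hk.comp measurable_snd)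
  simpa [setLIntegral_const] using this

lemma ell_ne_top (hfin : ∫⁻ x in G, ENNReal.ofReal (ρ x) ∂volume ≠ ⊤)
    {t : ℝ} (ht : 0 < t) : volume (levelSet G ρ t) ≠ ⊤ := by
  intro hT
  have h1 : volume (levelSet G ρ t)
      ≤ (volume.restrict G) {x | ENNReal.ofReal t ≤ ENNReal.ofReal (ρ x)} := by
    rw [Measure.restrict_apply' hG]
    exact measure_mono fun x hx => ⟨ENNReal.ofReal_le_ofReal hx.2, hx.1⟩
  have h2 := mul_meas_ge_le_lintegral₀ (μ := volume.restrict G)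
    (hρ.ennreal_ofReal.aemeasurable) (ENNReal.ofReal t)
  have h3 : ENNReal.ofReal t * volume (levelSet G ρ t)
      ≤ ∫⁻ x in G, ENNReal.ofReal (ρ x) ∂volume :=
    le_trans (mul_le_mul_right h1 _) h2
  rw [hT, ENNReal.mul_top (by simp [ENNReal.ofReal_eq_zero, not_le, ht])] at h3
  exact hfin (top_le_iff.mp h3)

lemma prod_indicator_key {w : Euc d × ℝ → ℝ≥0∞} (hw : Measurable w) :
    ∫⁻ p, ({p : Euc d × ℝ | p.2 ≤ ρ p.1}).indicator w p
        ∂((volume.restrict G).prod (volume.restrict (Ioi (0 : ℝ))))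
      = ∫⁻ x in G, ∫⁻ t in Ioc (0 : ℝ) (ρ x), w (x, t) ∂volume ∂volume := by
  have hS : MeasurableSet {p : Euc d × ℝ | p.2 ≤ ρ p.1} :=
    measurableSet_le measurable_snd (hρ.comp measurable_fst)
  rw [lintegral_prod _ (hw.indicator hS).aemeasurable]
  refine lintegral_congr fun x => ?_
  have h1 : (fun t => {p : Euc d × ℝ | p.2 ≤ ρ p.1}.indicator w (x, t))
      = (Iic (ρ x)).indicator (fun t => w (x, t)) := by
    funext t; by_cases h : t ≤ ρ x <;> simp [Set.indicator_apply, h]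
  rw [h1, lintegral_indicator measurableSet_Iic, Measure.restrict_restrict measurableSet_Iic,
    Set.Iic_inter_Ioi]

omit hρ in
lemma ae_Ioc_null {N : Set ℝ} (hNm : MeasurableSet N)
    (hN : ∫⁻ t in N ∩ Ioi (0 : ℝ), volume (levelSet G ρ t) ∂volume = 0) :
    ∀ᵐ x ∂(volume.restrict G), volume (N ∩ Ioc (0 : ℝ) (ρ x)) = 0 := by
  set ℓ : ℝ → ℝ≥0∞ := fun t => volume (levelSet G ρ t) with hℓ
  have hℓm : Measurable ℓ := ell_measurable
  have hz : volume ({t | ℓ t ≠ 0} ∩ (N ∩ Ioi (0 : ℝ))) = 0 := by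
    have h1 : ℓ =ᵐ[volume.restrict (N ∩ Ioi (0 : ℝ))] 0 :=
      (lintegral_eq_zero_iff' hℓm.aemeasurable).mp hN
    have h2 := h1
    rw [EventuallyEq, ae_iff] at h2
    rw [Measure.restrict_apply' (hNm.inter measurableSet_Ioi)] at h2
    simpa using h2
  set S' : Set ℝ := {t | 0 < t ∧ ℓ t = 0} with hS'
  rcases eq_empty_or_nonempty S' with hemp | hne
  · refine ae_of_all _ fun x => ?_
    refine measure_mono_null (fun t ht => ?_) hz
    have htS : t ∉ S' := by rw [hemp]; exact notMem_empty t
    exact ⟨fun h0 => htS ⟨ht.2.1, h0⟩, ht.1, ht.2.1⟩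
  · set t₀ := sInf S' with ht₀
    have hbdd : BddBelow S' := ⟨0, fun t ht => ht.1.le⟩
    have claim1 : ∀ q : ℝ, t₀ < q → ℓ q = 0 := by
      intro q hq
      obtain ⟨s, hs, hsq⟩ := exists_lt_of_csInf_lt hne hq
      exact le_antisymm (le_trans (ell_antitone hsq.le) hs.2.le) zero_le
    have claim2 : volume {x | x ∈ G ∧ t₀ < ρ x} = 0 := by
      have hsub : {x | x ∈ G ∧ t₀ < ρ x}
          ⊆ ⋃ (q : ℚ), ⋃ (_ : t₀ < (q : ℝ)), levelSet G ρ (q : ℝ) := by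
        intro x hx
        obtain ⟨q, hq1, hq2⟩ := exists_rat_btwn hx.2
        exact mem_iUnion.mpr ⟨q, mem_iUnion.mpr ⟨hq1, ⟨hx.1, hq2.le⟩⟩⟩
      refine measure_mono_null hsub (measure_iUnion_null fun q => measure_iUnion_null fun hq =>
        claim1 _ hq)
    have hae : ∀ᵐ x ∂(volume.restrict G), ρ x ≤ t₀ := by
      rw [ae_restrict_iff' hG, ae_iff]
      refine measure_mono_null (fun x hx => ?_) claim2
      simp only [mem_setOf_eq, Classical.not_imp, not_le] at hx ⊢
      exact hx
    filter_upwards [hae] with x hx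
    have hsub : N ∩ Ioc (0 : ℝ) (ρ x) ⊆ ({t | ℓ t ≠ 0} ∩ (N ∩ Ioi (0 : ℝ))) ∪ {t₀} := by
      intro t ht
      by_cases h0 : ℓ t = 0
      · right
        have h1 : t ∈ S' := ⟨ht.2.1, h0⟩
        have h2 : t₀ ≤ t := csInf_le hbdd h1
        have h3 : t ≤ t₀ := ht.2.2.trans hx
        simp [le_antisymm h3 h2]
      · exact Or.inl ⟨h0, ht.1, ht.2.1⟩
    exact measure_mono_null hsub (measure_union_null hz (measure_singleton t₀))

omit hG hρ in
lemma slice_inner_meas :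
    Measurable fun t : ℝ => (volume (levelSet G ρ t))⁻¹ • volume.restrict (levelSet G ρ t) := by
  refine Measure.measurable_of_measurable_coe _ fun s hs => ?_
  simp only [Measure.smul_apply, Measure.restrict_apply hs, smul_eq_mul]
  exact ell_measurable.inv.mul
    (Antitone.measurable fun a b hab => measure_mono (inter_subset_inter_right _
      (levelSet_antitone hab)))

omit hG in
lemma aux_inner_meas :
    Measurable fun x : Euc d =>
      (ENNReal.ofReal (ρ x))⁻¹ • volume.restrict (Icc (0 : ℝ) (ρ x)) := by
  refine Measure.measurable_of_measurable_coe _ fun s hs => ?_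
  simp only [Measure.smul_apply, Measure.restrict_apply hs, smul_eq_mul]
  refine hρ.ennreal_ofReal.inv.mul ?_
  exact (Monotone.measurable fun a b hab =>
    measure_mono (inter_subset_inter_right _ (Icc_subset_Icc_right hab))).comp hρ

lemma fubini_real {f : Euc d → ℝ} {g : ℝ → ℝ} (hf : Measurable f) (hg : Measurable g)
    (hf2 : ∫⁻ x in G, (‖f x‖₊ : ℝ≥0∞) ^ (2 : ℝ) * ENNReal.ofReal (ρ x) ∂volume ≠ ⊤)
    (hg2 : ∫⁻ t in Ioi (0 : ℝ),
      (‖g t‖₊ : ℝ≥0∞) ^ (2 : ℝ) * volume (levelSet G ρ t) ∂volume ≠ ⊤) :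
    ∫ x in G, (∫ t in Ioc (0 : ℝ) (ρ x), g t) * f x ∂volume
      = ∫ t in Ioi (0 : ℝ), (∫ x in levelSet G ρ t, f x) * g t ∂volume := by
  set S : Set (Euc d × ℝ) := {p : Euc d × ℝ | p.2 ≤ ρ p.1} with hSdef
  have hS : MeasurableSet S := measurableSet_le measurable_snd (hρ.comp measurable_fst)
  set F : Euc d × ℝ → ℝ := S.indicator (fun p => f p.1 * g p.2) with hFdef
  have hFm : Measurable F := ((hf.comp measurable_fst).mul (hg.comp measurable_snd)).indicator hS
  set P := (volume.restrict G).prod (volume.restrict (Ioi (0 : ℝ))) with hP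
  have hsplit : ∀ p : Euc d × ℝ, (‖F p‖₊ : ℝ≥0∞)
      = S.indicator (fun p => (‖f p.1‖₊ : ℝ≥0∞)) p
        * S.indicator (fun p => (‖g p.2‖₊ : ℝ≥0∞)) p := by
    intro p
    by_cases hp : p ∈ S <;>
      simp [hFdef, Set.indicator_of_mem, Set.indicator_of_notMem, hp, nnnorm_mul,
        ENNReal.coe_mul]
  have hum : Measurable (S.indicator (fun p : Euc d × ℝ => (‖f p.1‖₊ : ℝ≥0∞))) :=
    ((hf.comp measurable_fst).nnnorm.coe_nnreal_ennreal).indicator hS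
  have hvm : Measurable (S.indicator (fun p : Euc d × ℝ => (‖g p.2‖₊ : ℝ≥0∞))) :=
    ((hg.comp measurable_snd).nnnorm.coe_nnreal_ennreal).indicator hS
  have hindpow : ∀ (w : Euc d × ℝ → ℝ≥0∞) (p : Euc d × ℝ),
      S.indicator w p ^ (2 : ℝ) = S.indicator (fun p => w p ^ (2 : ℝ)) p := by
    intro w p
    by_cases hp : p ∈ S <;>
      simp [Set.indicator_of_mem, Set.indicator_of_notMem, hp,
        ENNReal.zero_rpow_of_pos (by norm_num : (0:ℝ) < 2)]
  have hu2 : ∫⁻ p, S.indicator (fun p : Euc d × ℝ => (‖f p.1‖₊ : ℝ≥0∞)) p ^ (2 : ℝ) ∂P ≠ ⊤ := by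
    simp_rw [hindpow]
    rw [prod_indicator_key hG hρ (w := fun p => (‖f p.1‖₊ : ℝ≥0∞) ^ (2:ℝ))
      (((hf.comp measurable_fst).nnnorm.coe_nnreal_ennreal).pow_const _)]
    have : ∀ x : Euc d, ∫⁻ t in Ioc (0 : ℝ) (ρ x), (‖f x‖₊ : ℝ≥0∞) ^ (2 : ℝ) ∂volume
        = (‖f x‖₊ : ℝ≥0∞) ^ (2 : ℝ) * ENNReal.ofReal (ρ x) := by
      intro x; rw [setLIntegral_const, Real.volume_Ioc, sub_zero]
    simp_rw [this]
    exact hf2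
  have hv2 : ∫⁻ p, S.indicator (fun p : Euc d × ℝ => (‖g p.2‖₊ : ℝ≥0∞)) p ^ (2 : ℝ) ∂P ≠ ⊤ := by
    simp_rw [hindpow]
    rw [prod_indicator_key hG hρ (w := fun p => (‖g p.2‖₊ : ℝ≥0∞) ^ (2:ℝ))
      (((hg.comp measurable_snd).nnnorm.coe_nnreal_ennreal).pow_const _)]
    rw [key_right hG hρ (hg.nnnorm.coe_nnreal_ennreal.pow_const _)]
    exact hg2
  have hconj : (2 : ℝ).HolderConjugate 2 := by constructor <;> norm_num
  have hfin : HasFiniteIntegral F P := by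
    show ∫⁻ p, (‖F p‖₊ : ℝ≥0∞) ∂P < ⊤
    calc ∫⁻ p, (‖F p‖₊ : ℝ≥0∞) ∂P
        = ∫⁻ p, (S.indicator (fun p : Euc d × ℝ => (‖f p.1‖₊ : ℝ≥0∞)) *
            S.indicator (fun p : Euc d × ℝ => (‖g p.2‖₊ : ℝ≥0∞))) p ∂P :=
          lintegral_congr fun p => by rw [hsplit p]; rfl
      _ ≤ (∫⁻ p, S.indicator (fun p : Euc d × ℝ => (‖f p.1‖₊ : ℝ≥0∞)) p ^ (2:ℝ) ∂P) ^ (1/(2:ℝ)) *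
          (∫⁻ p, S.indicator (fun p : Euc d × ℝ => (‖g p.2‖₊ : ℝ≥0∞)) p ^ (2:ℝ) ∂P) ^ (1/(2:ℝ)) :=
          ENNReal.lintegral_mul_le_Lp_mul_Lq P hconj hum.aemeasurable hvm.aemeasurable
      _ < ⊤ := ENNReal.mul_lt_top (ENNReal.rpow_lt_top_of_nonneg (by norm_num) hu2)
          (ENNReal.rpow_lt_top_of_nonneg (by norm_num) hv2)
  have hInt : Integrable (uncurry fun x t => F (x, t)) P := ⟨hFm.aestronglyMeasurable, hfin⟩
  have hswap := integral_integral_swap hInt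
  have hleft : ∀ x : Euc d, (∫ t, F (x, t) ∂(volume.restrict (Ioi (0:ℝ))))
      = (∫ t in Ioc (0 : ℝ) (ρ x), g t) * f x := by
    intro x
    have h1 : (fun t => F (x, t)) = (Iic (ρ x)).indicator (fun t => f x * g t) := by
      funext t; by_cases h : t ≤ ρ x <;> simp [hFdef, hSdef, Set.indicator_apply, h]
    rw [h1, integral_indicator measurableSet_Iic, Measure.restrict_restrict measurableSet_Iic,
      Set.Iic_inter_Ioi, integral_const_mul, mul_comm]
  have hright : ∀ t ∈ Ioi (0:ℝ), (∫ x, F (x, t) ∂(volume.restrict G))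
      = (∫ x in levelSet G ρ t, f x) * g t := by
    intro t _
    have h1 : (fun x => F (x, t)) = ({x : Euc d | t ≤ ρ x}).indicator (fun x => f x * g t) := by
      funext x; by_cases h : t ≤ ρ x <;> simp [hFdef, hSdef, Set.indicator_apply, h]
    rw [h1, integral_indicator (measurableSet_le measurable_const hρ),
      Measure.restrict_restrict (measurableSet_le measurable_const hρ), ← levelSet_eq,
      integral_mul_const]
  calc ∫ x in G, (∫ t in Ioc (0 : ℝ) (ρ x), g t) * f x ∂volume
      = ∫ x in G, ∫ t, F (x, t) ∂(volume.restrict (Ioi (0:ℝ))) ∂volume :=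
        integral_congr_ae (ae_of_all _ fun x => (hleft x).symm)
    _ = ∫ t in Ioi (0:ℝ), ∫ x, F (x, t) ∂(volume.restrict G) ∂volume := hswap
    _ = ∫ t in Ioi (0:ℝ), (∫ x in levelSet G ρ t, f x) * g t ∂volume :=
        setIntegral_congr_fun measurableSet_Ioi fun t ht => hright t ht

end LevelSet

theorem statement10 (d : ℕ) (G : Set (Euc d)) (hG : MeasurableSet G)
    (ρ : Euc d → ℝ) (hρ : Measurable ρ) (hpos : ∀ x ∈ G, 0 < ρ x)
    (hint : IntegrableOn ρ G) :
    (∀ (g : ℝ → ℝ) (f : Euc d → ℝ),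
        MemLp g 2 (auxMeasure G ρ) → MemLp f 2 (targetMeasure G ρ) →
        ∫ x, Vop ρ g x * f x ∂(targetMeasure G ρ)
          = ∫ t, g t * Vstar G ρ f t ∂(auxMeasure G ρ)) ∧
      (∀ f : Euc d → ℝ, MemLp f 2 (targetMeasure G ρ) →
        (fun x => ∫ y, f y ∂(sliceKernel G ρ x))
          =ᵐ[targetMeasure G ρ] fun x => Vop ρ (Vstar G ρ f) x) ∧
      (∀ g : ℝ → ℝ, MemLp g 2 (auxMeasure G ρ) →
        (fun t => ∫ s, g s ∂(auxKernel G ρ t))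
          =ᵐ[auxMeasure G ρ] fun t => Vstar G ρ (Vop ρ g) t) := by
  classical
  by_cases hG0 : volume G = 0
  · have hπ0 : targetMeasure G ρ = 0 := by
      unfold targetMeasure
      rw [Measure.restrict_eq_zero.mpr hG0]
      simp
    have hμ0 : auxMeasure G ρ = 0 := by
      unfold auxMeasure
      have hℓ0 : ∀ t, volume (levelSet G ρ t) = 0 := fun t =>
        measure_mono_null (levelSet_subset t) hG0
      simp [hℓ0]
    refine ⟨fun g f _ _ => ?_, fun f _ => ?_, fun g _ => ?_⟩ <;>
      simp [hπ0, hμ0, Filter.EventuallyEq, MeasureTheory.ae_zero]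
  -- Non-degenerate case
  set ℓ : ℝ → ℝ≥0∞ := fun t => volume (levelSet G ρ t) with hℓdef
  have hℓm : Measurable ℓ := ell_measurable
  set c : ℝ≥0∞ := ∫⁻ x in G, ENNReal.ofReal (ρ x) with hcdef
  have hc_fin : c ≠ ⊤ := by
    refine ne_top_of_le_ne_top hint.2.ne (lintegral_mono fun x => ?_)
    exact Real.ofReal_le_enorm (ρ x)
  have hc0 : c ≠ 0 := by
    intro h0
    have h1 : (fun x => ENNReal.ofReal (ρ x)) =ᵐ[volume.restrict G] 0 :=
      (lintegral_eq_zero_iff' hρ.ennreal_ofReal.aemeasurable).mp h0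
    have h2 : ∀ᵐ x ∂(volume.restrict G), False := by
      filter_upwards [h1, ae_restrict_mem hG] with x hx1 hx2
      have := hpos x hx2
      simp only [Pi.zero_apply, ENNReal.ofReal_eq_zero] at hx1
      linarith
    rw [ae_iff] at h2
    simp only [not_false_eq_true, setOf_true, Measure.restrict_apply_univ] at h2
    exact hG0 h2
  have hm : (∫⁻ t in Ioi (0:ℝ), volume (levelSet G ρ t)) = c := (key_const hG hρ).symm
  set η := (volume.restrict G).withDensity (fun x => ENNReal.ofReal (ρ x)) with hηdef
  set ξ := (volume.restrict (Ioi (0:ℝ))).withDensity ℓ with hξdef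
  have hπ : targetMeasure G ρ = c⁻¹ • η := rfl
  have hμ : auxMeasure G ρ = c⁻¹ • ξ := by unfold auxMeasure; rw [hm]
  have hη : η = c • targetMeasure G ρ := by
    rw [hπ, smul_smul, ENNReal.mul_inv_cancel hc0 hc_fin, one_smul]
  have hξ : ξ = c • auxMeasure G ρ := by
    rw [hμ, smul_smul, ENNReal.mul_inv_cancel hc0 hc_fin, one_smul]
  have hηuniv : η univ = c := by
    rw [hηdef, withDensity_apply _ MeasurableSet.univ, Measure.restrict_univ]
  have hξuniv : ξ univ = c := by
    rw [hξdef, withDensity_apply _ MeasurableSet.univ, Measure.restrict_univ, hm]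
  have hprobπ : IsProbabilityMeasure (targetMeasure G ρ) := by
    constructor
    rw [hπ, Measure.smul_apply, hηuniv, smul_eq_mul, ENNReal.inv_mul_cancel hc0 hc_fin]
  have hprobμ : IsProbabilityMeasure (auxMeasure G ρ) := by
    constructor
    rw [hμ, Measure.smul_apply, hξuniv, smul_eq_mul, ENNReal.inv_mul_cancel hc0 hc_fin]
  have hACπ : targetMeasure G ρ ≪ volume.restrict G := by
    rw [hπ]
    intro s hs
    rw [Measure.smul_apply, withDensity_absolutelyContinuous (volume.restrict G) _ hs,
      smul_eq_mul, mul_zero]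
  have hACμ : auxMeasure G ρ ≪ volume.restrict (Ioi (0:ℝ)) := by
    rw [hμ]
    intro s hs
    rw [Measure.smul_apply, withDensity_absolutelyContinuous (volume.restrict (Ioi (0:ℝ))) ℓ hs,
      smul_eq_mul, mul_zero]
  have hπ_null : ∀ {A : Set (Euc d)}, MeasurableSet A → targetMeasure G ρ A = 0 →
      volume (A ∩ G) = 0 := by
    intro A hA h0
    rw [hπ, Measure.smul_apply, smul_eq_mul, mul_eq_zero] at h0
    have hη0 : η A = 0 := h0.resolve_left (ENNReal.inv_ne_zero.mpr hc_fin)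
    rw [hηdef, withDensity_apply _ hA, Measure.restrict_restrict hA] at hη0
    have h1 : (fun x => ENNReal.ofReal (ρ x)) =ᵐ[volume.restrict (A ∩ G)] 0 :=
      (lintegral_eq_zero_iff' hρ.ennreal_ofReal.aemeasurable).mp hη0
    have h2 : ∀ᵐ x ∂(volume.restrict (A ∩ G)), False := by
      filter_upwards [h1, ae_restrict_mem (hA.inter hG)] with x hx1 hx2
      have := hpos x hx2.2
      simp only [Pi.zero_apply, ENNReal.ofReal_eq_zero] at hx1
      linarith
    rw [ae_iff] at h2
    simpa using h2
  have hμ_null : ∀ {B : Set ℝ}, MeasurableSet B → auxMeasure G ρ B = 0 →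
      ∫⁻ t in B ∩ Ioi (0:ℝ), volume (levelSet G ρ t) ∂volume = 0 := by
    intro B hB h0
    rw [hμ, Measure.smul_apply, smul_eq_mul, mul_eq_zero] at h0
    have hξ0 : ξ B = 0 := h0.resolve_left (ENNReal.inv_ne_zero.mpr hc_fin)
    rwa [hξdef, withDensity_apply _ hB, Measure.restrict_restrict hB] at hξ0

  -- representative machinery
  have frep : ∀ (f : Euc d → ℝ), MemLp f 2 (targetMeasure G ρ) →
      ∃ (f' : Euc d → ℝ) (M : Set (Euc d)), Measurable f' ∧ f =ᵐ[targetMeasure G ρ] f' ∧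
        MeasurableSet M ∧ volume M = 0 ∧ {x | f x ≠ f' x} ⊆ M ∪ Gᶜ ∧
        MemLp f' 2 (targetMeasure G ρ) := by
    intro f hf
    have hfm := hf.aestronglyMeasurable.aemeasurable
    refine ⟨hfm.mk f,
      toMeasurable volume ((toMeasurable (targetMeasure G ρ) {x | f x ≠ hfm.mk f x}) ∩ G),
      hfm.measurable_mk, hfm.ae_eq_mk, measurableSet_toMeasurable _ _, ?_, ?_, hf.ae_eq hfm.ae_eq_mk⟩
    · rw [measure_toMeasurable]
      refine hπ_null (measurableSet_toMeasurable _ _) ?_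
      rw [measure_toMeasurable]
      exact ae_iff.mp hfm.ae_eq_mk
    · intro x hx
      by_cases hxG : x ∈ G
      · exact Or.inl (subset_toMeasurable _ _ ⟨subset_toMeasurable _ _ hx, hxG⟩)
      · exact Or.inr hxG
  have grep : ∀ (g : ℝ → ℝ), MemLp g 2 (auxMeasure G ρ) →
      ∃ (g' : ℝ → ℝ) (N : Set ℝ), Measurable g' ∧ g =ᵐ[auxMeasure G ρ] g' ∧
        MeasurableSet N ∧ (∫⁻ t in N ∩ Ioi (0:ℝ), volume (levelSet G ρ t) ∂volume = 0) ∧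
        {t | g t ≠ g' t} ⊆ N ∧ MemLp g' 2 (auxMeasure G ρ) := by
    intro g hg
    have hgm := hg.aestronglyMeasurable.aemeasurable
    refine ⟨hgm.mk g, toMeasurable (auxMeasure G ρ) {t | g t ≠ hgm.mk g t},
      hgm.measurable_mk, hgm.ae_eq_mk, measurableSet_toMeasurable _ _, ?_,
      subset_toMeasurable _ _, hg.ae_eq hgm.ae_eq_mk⟩
    refine hμ_null (measurableSet_toMeasurable _ _) ?_
    rw [measure_toMeasurable]
    exact ae_iff.mp hgm.ae_eq_mk
  -- lemmas about replacing f by its representative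
  have hfae_sub : ∀ {f f' : Euc d → ℝ} {M : Set (Euc d)}, volume M = 0 →
      {x | f x ≠ f' x} ⊆ M ∪ Gᶜ → ∀ {s : Set (Euc d)}, MeasurableSet s → s ⊆ G →
      f =ᵐ[volume.restrict s] f' := by
    intro f f' M hM0 hMsub s hs hsub
    rw [EventuallyEq, ae_iff, Measure.restrict_apply' hs]
    refine measure_mono_null (fun x hx => ?_) hM0
    rcases hMsub hx.1 with h | h
    · exact h
    · exact absurd (hsub hx.2) h
  have hsliceA : ∀ (x : Euc d) {A : Set (Euc d)}, MeasurableSet A →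
      (∀ t, volume (A ∩ levelSet G ρ t) = 0) → sliceKernel G ρ x A = 0 := by
    intro x A hA h0
    simp only [sliceKernel, Measure.smul_apply, smul_eq_mul]
    rw [Measure.bind_apply hA slice_inner_meas.aemeasurable]
    have hz : ∀ t : ℝ, ((volume (levelSet G ρ t))⁻¹ • volume.restrict (levelSet G ρ t)) A = 0 := by
      intro t
      rw [Measure.smul_apply, Measure.restrict_apply hA, h0 t, smul_eq_mul, mul_zero]
    simp only [hz, lintegral_zero, mul_zero]
  refine ⟨?_, ?_, ?_⟩
  · -- Part 1 : adjointness
    intro g f hg hf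
    obtain ⟨f', M, hf'm, hff', hMm, hM0, hMsub, hf'2⟩ := frep f hf
    obtain ⟨g', N, hg'm, hgg', hNm, hNL, hNsub, hg'2⟩ := grep g hg
    have hVstar_eq : ∀ t, Vstar G ρ f t = Vstar G ρ f' t := by
      intro t
      unfold Vstar
      rw [integral_congr_ae
        (hfae_sub hM0 hMsub (measurableSet_levelSet hG hρ t) (levelSet_subset t))]
    have hIoc0 := ae_Ioc_null hG hNm hNL
    have hVop_ae : ∀ᵐ x ∂(volume.restrict G), Vop ρ g x = Vop ρ g' x := by
      filter_upwards [hIoc0] with x hx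
      unfold Vop
      congr 1
      refine integral_congr_ae ?_
      rw [EventuallyEq, ae_iff, Measure.restrict_apply' measurableSet_Ioc]
      refine measure_mono_null (fun t ht => ?_) hx
      exact ⟨hNsub ht.1, ht.2⟩
    have hf2L : ∫⁻ x in G, (‖f' x‖₊ : ℝ≥0∞) ^ (2:ℝ) * ENNReal.ofReal (ρ x) ∂volume ≠ ⊤ := by
      have h1 : ∫⁻ x, (‖f' x‖₊ : ℝ≥0∞) ^ (2:ℝ) ∂(targetMeasure G ρ) < ⊤ := by
        have := lintegral_rpow_enorm_lt_top_of_eLpNorm_lt_top (f := f') (p := 2)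
          two_ne_zero (by norm_num) hf'2.2
        exact (by simpa using this : ∫⁻ x, ‖f' x‖ₑ ^ (2:ℝ) ∂(targetMeasure G ρ) < ⊤)
      have h2 : ∫⁻ x, (‖f' x‖₊ : ℝ≥0∞) ^ (2:ℝ) ∂η ≠ ⊤ := by
        rw [hη, lintegral_smul_measure]
        exact ENNReal.mul_ne_top hc_fin h1.ne
      rw [hηdef, lintegral_withDensity_eq_lintegral_mul _ hρ.ennreal_ofReal
        (hf'm.nnnorm.coe_nnreal_ennreal.pow_const _)] at h2
      refine ne_top_of_le_ne_top h2 (le_of_eq (lintegral_congr fun x => ?_))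
      exact mul_comm _ _
    have hg2L : ∫⁻ t in Ioi (0:ℝ),
        (‖g' t‖₊ : ℝ≥0∞) ^ (2:ℝ) * volume (levelSet G ρ t) ∂volume ≠ ⊤ := by
      have h1 : ∫⁻ t, (‖g' t‖₊ : ℝ≥0∞) ^ (2:ℝ) ∂(auxMeasure G ρ) < ⊤ := by
        have := lintegral_rpow_enorm_lt_top_of_eLpNorm_lt_top (f := g') (p := 2)
          two_ne_zero (by norm_num) hg'2.2
        exact (by simpa using this : ∫⁻ t, ‖g' t‖ₑ ^ (2:ℝ) ∂(auxMeasure G ρ) < ⊤)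
      have h2 : ∫⁻ t, (‖g' t‖₊ : ℝ≥0∞) ^ (2:ℝ) ∂ξ ≠ ⊤ := by
        rw [hξ, lintegral_smul_measure]
        exact ENNReal.mul_ne_top hc_fin h1.ne
      rw [hξdef, lintegral_withDensity_eq_lintegral_mul _ hℓm
        (hg'm.nnnorm.coe_nnreal_ennreal.pow_const _)] at h2
      refine ne_top_of_le_ne_top h2 (le_of_eq (lintegral_congr fun t => ?_))
      exact mul_comm _ _
    have hL1 : ∫ x, Vop ρ g x * f x ∂(targetMeasure G ρ)
        = ∫ x, Vop ρ g' x * f' x ∂(targetMeasure G ρ) := by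
      refine integral_congr_ae ?_
      have hVopπ : ∀ᵐ x ∂(targetMeasure G ρ), Vop ρ g x = Vop ρ g' x :=
        hVop_ae.filter_mono hACπ.ae_le
      filter_upwards [hff', hVopπ] with x h1 h2
      rw [h1, h2]
    have hL2 : ∫ x, Vop ρ g' x * f' x ∂(targetMeasure G ρ)
        = c⁻¹.toReal * ∫ x in G, (∫ t in Ioc (0:ℝ) (ρ x), g' t) * f' x ∂volume := by
      rw [hπ, integral_smul_measure, smul_eq_mul]
      congr 1
      have hηeq : η = (volume.restrict G).withDensity
          (fun x => (((ρ x).toNNReal : ℝ≥0) : ℝ≥0∞)) := rfl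
      rw [hηeq, integral_withDensity_eq_integral_smul hρ.real_toNNReal]
      refine setIntegral_congr_fun hG fun x hx => ?_
      have hρx : ρ x ≠ 0 := (hpos x hx).ne'
      rw [NNReal.smul_def, Real.coe_toNNReal _ (hpos x hx).le]
      unfold Vop
      calc ρ x * ((ρ x)⁻¹ * (∫ t in Ioc (0:ℝ) (ρ x), g' t) * f' x)
          = (ρ x * (ρ x)⁻¹) * ((∫ t in Ioc (0:ℝ) (ρ x), g' t) * f' x) := by ring
        _ = (∫ t in Ioc (0:ℝ) (ρ x), g' t) * f' x := by
            rw [mul_inv_cancel₀ hρx, one_mul]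
    have hL3 := fubini_real hG hρ hf'm hg'm hf2L hg2L
    have hR1 : ∫ t, g t * Vstar G ρ f t ∂(auxMeasure G ρ)
        = ∫ t, g' t * Vstar G ρ f' t ∂(auxMeasure G ρ) := by
      refine integral_congr_ae ?_
      filter_upwards [hgg'] with t h1
      rw [h1, hVstar_eq t]
    have hR2 : ∫ t, g' t * Vstar G ρ f' t ∂(auxMeasure G ρ)
        = c⁻¹.toReal * ∫ t in Ioi (0:ℝ), (∫ x in levelSet G ρ t, f' x) * g' t ∂volume := by
      rw [hμ, integral_smul_measure, smul_eq_mul]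
      congr 1
      have hξeq : ξ = (volume.restrict (Ioi (0:ℝ))).withDensity
          (fun t => (((ℓ t).toNNReal : ℝ≥0) : ℝ≥0∞)) := by
        refine withDensity_congr_ae ?_
        filter_upwards [ae_restrict_mem measurableSet_Ioi] with t ht
        exact (ENNReal.coe_toNNReal (ell_ne_top hG hρ hc_fin ht)).symm
      have hm2 : Measurable fun t => (ℓ t).toNNReal := ENNReal.measurable_toNNReal.comp hℓm
      rw [hξeq, integral_withDensity_eq_integral_smul hm2]
      refine setIntegral_congr_fun measurableSet_Ioi fun t ht => ?_
      have hfin : ℓ t ≠ ⊤ := ell_ne_top hG hρ hc_fin ht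
      by_cases h0 : ℓ t = 0
      · have hres : volume.restrict (levelSet G ρ t) = 0 := Measure.restrict_eq_zero.mpr h0
        unfold Vstar
        rw [show volume (levelSet G ρ t) = ℓ t from rfl, h0]
        simp [hres]
      · rw [NNReal.smul_def]
        have hcoe : (((ℓ t).toNNReal : ℝ≥0) : ℝ) = (ℓ t).toReal := rfl
        rw [hcoe]
        unfold Vstar
        rw [show volume (levelSet G ρ t) = ℓ t from rfl]
        have hr0 : (ℓ t).toReal ≠ 0 := ENNReal.toReal_ne_zero.mpr ⟨h0, hfin⟩
        calc (ℓ t).toReal * (g' t * ((ℓ t).toReal⁻¹ * ∫ x in levelSet G ρ t, f' x))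
            = ((ℓ t).toReal * (ℓ t).toReal⁻¹) * (g' t * ∫ x in levelSet G ρ t, f' x) := by ring
          _ = (∫ x in levelSet G ρ t, f' x) * g' t := by
              rw [mul_inv_cancel₀ hr0, one_mul, mul_comm]
    rw [hL1, hL2, hL3, hR1, hR2]
  · -- Part 2 : U = V V*
    intro f hf
    obtain ⟨f', M, hf'm, hff', hMm, hM0, hMsub, hf'2⟩ := frep f hf
    have hVstar_eq : ∀ t, Vstar G ρ f t = Vstar G ρ f' t := by
      intro t
      unfold Vstar
      rw [integral_congr_ae
        (hfae_sub hM0 hMsub (measurableSet_levelSet hG hρ t) (levelSet_subset t))]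
    have hslice_f : ∀ x, ∫ y, f y ∂(sliceKernel G ρ x) = ∫ y, f' y ∂(sliceKernel G ρ x) := by
      intro x
      refine integral_congr_ae ?_
      rw [EventuallyEq, ae_iff]
      have hMz : sliceKernel G ρ x M = 0 := hsliceA x hMm fun t =>
        measure_mono_null inter_subset_left hM0
      have hGz : sliceKernel G ρ x Gᶜ = 0 := hsliceA x hG.compl fun t => by
        rw [show Gᶜ ∩ levelSet G ρ t = ∅ from eq_empty_of_subset_empty
          (fun y hy => hy.1 (levelSet_subset t hy.2))]
        exact measure_empty
      refine measure_mono_null (fun y hy => hMsub hy) ?_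
      exact measure_union_null hMz hGz
    set W : ℝ → ℝ≥0∞ := fun t =>
      (volume (levelSet G ρ t))⁻¹ * ∫⁻ y in levelSet G ρ t, (‖f' y‖₊ : ℝ≥0∞) ∂volume with hWdef
    have hWm : Measurable W := hℓm.inv.mul
      (Antitone.measurable fun a b hab => lintegral_mono_set (levelSet_antitone hab))
    set B : Euc d → ℝ≥0∞ := fun x => ∫⁻ t in Ioc (0:ℝ) (ρ x), W t ∂volume with hBdef
    have hBmono : Monotone (fun r : ℝ => ∫⁻ t in Ioc (0:ℝ) r, W t ∂volume) :=
      fun a b hab => lintegral_mono_set (Ioc_subset_Ioc_right hab)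
    have hBm : Measurable B := hBmono.measurable.comp hρ
    have hπL1 : ∫⁻ x, (‖f' x‖₊ : ℝ≥0∞) ∂(targetMeasure G ρ) ≠ ⊤ :=
      (hf'2.integrable one_le_two).2.ne
    have hBfin : ∫⁻ x in G, B x ∂volume ≠ ⊤ := by
      rw [hBdef]
      rw [key_right hG hρ hWm]
      refine ne_top_of_le_ne_top ?_ (lintegral_mono fun t => inv_mul_mul_le' _ _)
      rw [← key_left hG hρ hf'm.nnnorm.coe_nnreal_ennreal]
      have heq : ∫⁻ x in G, (‖f' x‖₊ : ℝ≥0∞) * ENNReal.ofReal (ρ x) ∂volume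
          = ∫⁻ x, (‖f' x‖₊ : ℝ≥0∞) ∂η := by
        rw [hηdef, lintegral_withDensity_eq_lintegral_mul _ hρ.ennreal_ofReal hf'm.nnnorm.coe_nnreal_ennreal]
        exact lintegral_congr fun x => mul_comm _ _
      rw [heq, hη, lintegral_smul_measure]
      exact ENNReal.mul_ne_top hc_fin hπL1
    have hBae : ∀ᵐ x ∂(volume.restrict G), B x < ⊤ := ae_lt_top hBm hBfin
    have hmain : ∀ᵐ x ∂(volume.restrict G),
        ∫ y, f' y ∂(sliceKernel G ρ x) = Vop ρ (Vstar G ρ f') x := by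
      filter_upwards [hBae, ae_restrict_mem hG] with x hBx hxG
      have hρx := hpos x hxG
      have hbind : ∫⁻ y, (‖f' y‖₊ : ℝ≥0∞) ∂((volume.restrict (Ioc (0:ℝ) (ρ x))).bind
          (fun t => (volume (levelSet G ρ t))⁻¹ • volume.restrict (levelSet G ρ t))) = B x := by
        rw [Measure.lintegral_bind slice_inner_meas.aemeasurable hf'm.nnnorm.coe_nnreal_ennreal.aemeasurable]
        exact lintegral_congr fun t => by rw [lintegral_smul_measure, smul_eq_mul]
      simp only [sliceKernel]
      rw [integral_smul_measure,
        my_integral_bind slice_inner_meas hf'm (by rw [hbind]; exact hBx)]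
      have hinner : ∀ t : ℝ, ∫ y, f' y
          ∂((volume (levelSet G ρ t))⁻¹ • volume.restrict (levelSet G ρ t))
          = Vstar G ρ f' t := by
        intro t
        rw [integral_smul_measure, ENNReal.toReal_inv, smul_eq_mul]
        rfl
      unfold Vop
      rw [ENNReal.toReal_inv, ENNReal.toReal_ofReal hρx.le, smul_eq_mul]
      congr 1
      exact integral_congr_ae (ae_of_all _ fun t => hinner t)
    have h := hmain.filter_mono hACπ.ae_le
    rw [show (fun x => ∫ y, f y ∂(sliceKernel G ρ x))
        = fun x => ∫ y, f' y ∂(sliceKernel G ρ x) from funext hslice_f,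
      show Vstar G ρ f = Vstar G ρ f' from funext hVstar_eq]
    exact h
  · -- Part 3 : Q = V* V
    intro g hg
    obtain ⟨g', N, hg'm, hgg', hNm, hNL, hNsub, hg'2⟩ := grep g hg
    have hIoc0 := ae_Ioc_null hG hNm hNL
    have hVop_ae : ∀ᵐ x ∂(volume.restrict G), Vop ρ g x = Vop ρ g' x := by
      filter_upwards [hIoc0] with x hx
      unfold Vop
      congr 1
      refine integral_congr_ae ?_
      rw [EventuallyEq, ae_iff, Measure.restrict_apply' measurableSet_Ioc]
      refine measure_mono_null (fun t ht => ?_) hx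
      exact ⟨hNsub ht.1, ht.2⟩
    have hkerN : ∀ t, auxKernel G ρ t N = 0 := by
      intro t
      simp only [auxKernel, Measure.smul_apply, smul_eq_mul]
      rw [Measure.bind_apply hNm (aux_inner_meas hρ).aemeasurable]
      have hptw : ∀ᵐ x ∂(volume.restrict (levelSet G ρ t)),
          ((ENNReal.ofReal (ρ x))⁻¹ • volume.restrict (Icc (0:ℝ) (ρ x))) N = 0 := by
        filter_upwards [ae_restrict_of_ae_restrict_of_subset (levelSet_subset t) hIoc0] with x hx
        rw [Measure.smul_apply, Measure.restrict_apply hNm, smul_eq_mul]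
        have hz : volume (N ∩ Icc (0:ℝ) (ρ x)) = 0 := by
          refine measure_mono_null (fun s hs => ?_)
            (measure_union_null (measure_singleton (0:ℝ)) hx)
          rcases eq_or_lt_of_le hs.2.1 with h | h
          · exact Or.inl (by simp [← h])
          · exact Or.inr ⟨hs.1, h, hs.2.2⟩
        rw [hz, mul_zero]
      rw [lintegral_congr_ae hptw, lintegral_zero, mul_zero]
    have hauxK_eq : ∀ t, ∫ s, g s ∂(auxKernel G ρ t) = ∫ s, g' s ∂(auxKernel G ρ t) := by
      intro t
      refine integral_congr_ae ?_
      rw [EventuallyEq, ae_iff]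
      exact measure_mono_null (fun s hs => hNsub hs) (hkerN t)
    have hVstarVop : ∀ t, Vstar G ρ (Vop ρ g) t = Vstar G ρ (Vop ρ g') t := by
      intro t
      unfold Vstar
      congr 1
      exact integral_congr_ae (ae_restrict_of_ae_restrict_of_subset (levelSet_subset t) hVop_ae)
    set K : ℝ → ℝ≥0∞ := fun r => ∫⁻ s in Icc (0:ℝ) r, (‖g' s‖₊ : ℝ≥0∞) ∂volume with hKdef
    set W' : Euc d → ℝ≥0∞ := fun x => (ENNReal.ofReal (ρ x))⁻¹ * K (ρ x) with hW'def
    have hKmono : Monotone K := fun a b hab => lintegral_mono_set (Icc_subset_Icc_right hab)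
    have hW'm : Measurable W' := hρ.ennreal_ofReal.inv.mul (hKmono.measurable.comp hρ)
    set B' : ℝ → ℝ≥0∞ := fun t => ∫⁻ x in levelSet G ρ t, W' x ∂volume with hB'def
    have hB'm : Measurable B' :=
      Antitone.measurable fun a b hab => lintegral_mono_set (levelSet_antitone hab)
    have hKIoc : ∀ r : ℝ, K r = ∫⁻ s in Ioc (0:ℝ) r, (‖g' s‖₊ : ℝ≥0∞) ∂volume := by
      intro r
      simp only [hKdef]
      rw [← Measure.restrict_congr_set Ioc_ae_eq_Icc]
    have hμL1 : ∫⁻ t, (‖g' t‖₊ : ℝ≥0∞) ∂(auxMeasure G ρ) ≠ ⊤ :=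
      (hg'2.integrable one_le_two).2.ne
    have hB'fin : ∫⁻ t in Ioi (0:ℝ), B' t ∂volume ≠ ⊤ := by
      rw [hB'def, ← key_left hG hρ hW'm]
      refine ne_top_of_le_ne_top ?_ (lintegral_mono fun x => inv_mul_mul_le' _ _)
      have h1 : ∫⁻ x in G, K (ρ x) ∂volume
          = ∫⁻ t in Ioi (0:ℝ), (‖g' t‖₊ : ℝ≥0∞) * volume (levelSet G ρ t) ∂volume := by
        simp_rw [hKIoc]
        exact key_right hG hρ hg'm.nnnorm.coe_nnreal_ennreal
      rw [h1]
      have h2 : ∫⁻ t in Ioi (0:ℝ), (‖g' t‖₊ : ℝ≥0∞) * volume (levelSet G ρ t) ∂volume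
          = ∫⁻ t, (‖g' t‖₊ : ℝ≥0∞) ∂ξ := by
        rw [hξdef, lintegral_withDensity_eq_lintegral_mul _ hℓm hg'm.nnnorm.coe_nnreal_ennreal]
        exact lintegral_congr fun t => mul_comm _ _
      rw [h2, hξ, lintegral_smul_measure]
      exact ENNReal.mul_ne_top hc_fin hμL1
    have hB'ae : ∀ᵐ t ∂(volume.restrict (Ioi (0:ℝ))), B' t < ⊤ := ae_lt_top hB'm hB'fin
    have hmain : ∀ᵐ t ∂(volume.restrict (Ioi (0:ℝ))),
        ∫ s, g' s ∂(auxKernel G ρ t) = Vstar G ρ (Vop ρ g') t := by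
      filter_upwards [hB'ae] with t hBt
      have hbind : ∫⁻ s, (‖g' s‖₊ : ℝ≥0∞) ∂((volume.restrict (levelSet G ρ t)).bind
          (fun x => (ENNReal.ofReal (ρ x))⁻¹ • volume.restrict (Icc (0:ℝ) (ρ x)))) = B' t := by
        rw [Measure.lintegral_bind (aux_inner_meas hρ).aemeasurable hg'm.nnnorm.coe_nnreal_ennreal.aemeasurable]
        exact lintegral_congr fun x => by rw [lintegral_smul_measure, smul_eq_mul]
      simp only [auxKernel]
      rw [integral_smul_measure,
        my_integral_bind (aux_inner_meas hρ) hg'm (by rw [hbind]; exact hBt)]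
      unfold Vstar
      rw [ENNReal.toReal_inv, smul_eq_mul]
      congr 1
      refine setIntegral_congr_fun (measurableSet_levelSet hG hρ t) fun x hx => ?_
      rw [integral_smul_measure, ENNReal.toReal_inv, ENNReal.toReal_ofReal (hpos x hx.1).le,
        smul_eq_mul]
      unfold Vop
      congr 1
      rw [Measure.restrict_congr_set Ioc_ae_eq_Icc]
    have h := hmain.filter_mono hACμ.ae_le
    rw [show (fun t => ∫ s, g s ∂(auxKernel G ρ t))
        = fun t => ∫ s, g' s ∂(auxKernel G ρ t) from funext hauxK_eq,
      show Vstar G ρ (Vop ρ g) = Vstar G ρ (Vop ρ g') from funext hVstarVop]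
    exact h
end
end
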